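/- arXiv:2403.03912 — 7 statements merged into one kernel-verified Lean document; each statement's English description precedes it below -/
import Mathlib

section
/- Let b ≥ 2 be an integer and E a nonempty set of base-b digits. For each a ∈ E1 set s_{b,E}(a) = (1/b)·∫_{[0,1)} (ψ((a+x)/b) − ψ(1)) dμ_{b,E}(x). Then for every a ∈ E1 one has (ψ(a/b) − ψ(1))/#E ≤ s_{b,E}(a) < (ψ((a+1)/b) − ψ(1))/#E, and the lower bound is an equality if and only if E contains all the positive digits 1, …, b−1. -/
open MeasureTheory Real ENNReal

/-- The digamma function `ψ(x) = d/dx log Γ(x)`. -/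
noncomputable def digamma (x : ℝ) : ℝ := deriv (fun y => Real.log (Real.Gamma y)) x

/-- The Kempner sum `K(b,E)`: sum of reciprocals of positive integers whose
base-`b` digits all avoid the excluded set `E`. -/
noncomputable def kempnerSum (b : ℕ) (E : Finset ℕ) : ℝ :=
  ∑' n : ℕ, if n ≠ 0 ∧ ∀ d ∈ Nat.digits b n, d ∉ E then (n : ℝ)⁻¹ else 0

/-- The measure `μ_{b,E}` on `[0,1)`: the sum, over all finite strings of admissible
digits (digits `< b` not in `E`), of the weighted Dirac mass `b^{-l} δ_{n(X)/b^l}`. -/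
noncomputable def kempnerMeasure (b : ℕ) (E : Finset ℕ) : Measure ℝ :=
  Measure.sum (fun X : {l : List ℕ // ∀ d ∈ l, d < b ∧ d ∉ E} =>
    ((b : ℝ≥0∞) ^ X.1.length)⁻¹ •
      Measure.dirac (((Nat.ofDigits b X.1 : ℕ) : ℝ) / (b : ℝ) ^ X.1.length))

/-- `E₁ = E` if `0 ∉ E`, and `E₁ = (E ∪ {b}) \ {0}` if `0 ∈ E`. -/
def Eone (b : ℕ) (E : Finset ℕ) : Finset ℕ :=
  if 0 ∈ E then insert b (E.erase 0) else E

/-- `ζ(s) = ∑_{k ≥ 1} k⁻ˢ`. -/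
noncomputable def zetaVal (s : ℕ) : ℝ := ∑' k : ℕ, (((k : ℝ) + 1) ^ s)⁻¹

/-- `v_m(d) = ∫_{[0,1)} (d - x)^m dμ_{b,E}(x)`. -/
noncomputable def vMoment (b : ℕ) (E : Finset ℕ) (m : ℕ) (d : ℝ) : ℝ :=
  ∫ x in Set.Ico (0 : ℝ) 1, (d - x) ^ m ∂(kempnerMeasure b E)

/-- `s_{b,E}(a)`, the contribution of digit `a` in the digamma formula. -/
noncomputable def sBE (b : ℕ) (E : Finset ℕ) (a : ℕ) : ℝ :=
  (1 / (b : ℝ)) * ∫ x in Set.Ico (0 : ℝ) 1,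
    (digamma (((a : ℝ) + x) / b) - digamma 1) ∂(kempnerMeasure b E)

/-!
`log ∘ Γ` is strictly convex on `(0, ∞)`, being `x ↦ log Γ(x + 1) - log x` there, so `ψ` is
strictly increasing. As `a ∈ E₁` is positive, `g x = ψ((a + x)/b) - ψ(1)` is strictly increasing
on `[0, 1]`, and `μ_{b,E}` gives `[0, 1)` the mass `b/#E`. Integrating `g 0 ≤ g < g 1` over
`[0, 1)` gives both bounds. The upper one is strict because of the unit atom at `0` (the empty
string); the lower one is an equality iff `μ_{b,E}` puts no mass on `(0, 1)`, i.e. iff no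
admissible string has a positive digit.
-/

open Set

theorem strictConvexOn_log_Gamma : StrictConvexOn ℝ (Ioi 0) (Real.log ∘ Gamma) := by
  have hshift : ConvexOn ℝ (Ioi 0) fun x => Real.log (Gamma (x + 1)) :=
    (convexOn_log_Gamma.translate_left 1).subset
      (fun x (hx : 0 < x) => show (0 : ℝ) < 1 + x by linarith) (convex_Ioi 0)
  refine (hshift.sub_strictConcaveOn strictConcaveOn_log_Ioi).congr fun x (hx : 0 < x) => ?_
  simp [Gamma_add_one hx.ne', log_mul hx.ne' (Gamma_pos_of_pos hx).ne']

theorem differentiableAt_log_Gamma {x : ℝ} (hx : 0 < x) :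
    DifferentiableAt ℝ (Real.log ∘ Gamma) x :=
  (differentiableAt_Gamma fun m => by linarith [(Nat.cast_nonneg m : (0 : ℝ) ≤ m)]).log
    (Gamma_pos_of_pos hx).ne'

theorem digamma_strictMonoOn : StrictMonoOn digamma (Ioi 0) :=
  strictConvexOn_log_Gamma.strictMonoOn_deriv fun _ hx => differentiableAt_log_Gamma hx

section MonotoneIntegral

variable {μ : Measure ℝ} {g : ℝ → ℝ} {u v : ℝ}

theorem integrableOn_Ico_of_monotoneOn (hμ : μ (Ico u v) ≠ ∞) (hg : Measurable g)
    (hmono : MonotoneOn g (Icc u v)) : IntegrableOn g (Ico u v) μ := by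
  refine Measure.integrableOn_of_bounded (M := max |g u| |g v|) hμ hg.aestronglyMeasurable ?_
  filter_upwards [ae_restrict_mem measurableSet_Ico] with x hx
  have hxI : x ∈ Icc u v := Ico_subset_Icc_self hx
  exact abs_le_max_abs_abs (hmono (left_mem_Icc.2 (hx.1.trans hx.2.le)) hxI hx.1)
    (hmono hxI (right_mem_Icc.2 (hx.1.trans hx.2.le)) hx.2.le)

theorem mul_measureReal_le_setIntegral_Ico (hμ : μ (Ico u v) ≠ ∞) (hg : Measurable g)
    (hmono : MonotoneOn g (Icc u v)) :
    g u * μ.real (Ico u v) ≤ ∫ x in Ico u v, g x ∂μ := by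
  rw [mul_comm, ← smul_eq_mul, ← setIntegral_const]
  refine setIntegral_mono_on (integrableOn_const hμ) (integrableOn_Ico_of_monotoneOn hμ hg hmono)
    measurableSet_Ico fun x hx => hmono (left_mem_Icc.2 (hx.1.trans hx.2.le))
      (Ico_subset_Icc_self hx) hx.1

theorem setIntegral_pos_of_measure_singleton_ne_zero {α : Type*} [MeasurableSpace α]
    {μ : Measure α} {s : Set α} {f : α → ℝ} (hs : MeasurableSet s) (hf : IntegrableOn f s μ)
    (hf0 : ∀ x ∈ s, 0 ≤ f x) {x : α} (hx : x ∈ s) (hμx : μ {x} ≠ 0) (hfx : 0 < f x) :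
    0 < ∫ y in s, f y ∂μ := by
  rw [setIntegral_pos_iff_support_of_nonneg_ae (ae_restrict_of_forall_mem hs hf0) hf]
  exact hμx.bot_lt.trans_le (measure_mono (singleton_subset_iff.2 ⟨hfx.ne', hx⟩))

theorem setIntegral_Ico_lt_mul_measureReal (hμ : μ (Ico u v) ≠ ∞) (hg : Measurable g)
    (hmono : StrictMonoOn g (Icc u v)) (huv : u < v) (hμu : μ {u} ≠ 0) :
    ∫ x in Ico u v, g x ∂μ < g v * μ.real (Ico u v) := by
  have hgi := integrableOn_Ico_of_monotoneOn hμ hg hmono.monotoneOn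
  have hci : IntegrableOn (fun _ => g v) (Ico u v) μ := integrableOn_const hμ
  have hpos : 0 < ∫ x in Ico u v, (g v - g x) ∂μ :=
    setIntegral_pos_of_measure_singleton_ne_zero measurableSet_Ico (hci.sub hgi)
      (fun x hx => sub_nonneg.2 (hmono.monotoneOn (Ico_subset_Icc_self hx)
        (right_mem_Icc.2 huv.le) hx.2.le))
      (left_mem_Ico.2 huv) hμu
      (sub_pos.2 (hmono (left_mem_Icc.2 huv.le) (right_mem_Icc.2 huv.le) huv))
  rw [integral_sub hci hgi, setIntegral_const, smul_eq_mul] at hpos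
  linarith

theorem setIntegral_Ico_eq_mul_measureReal_iff (hμ : μ (Ico u v) ≠ ∞) (hg : Measurable g)
    (hmono : StrictMonoOn g (Icc u v)) :
    ∫ x in Ico u v, g x ∂μ = g u * μ.real (Ico u v) ↔ μ (Ioo u v) = 0 := by
  have hgi := integrableOn_Ico_of_monotoneOn hμ hg hmono.monotoneOn
  have hci : IntegrableOn (fun _ => g u) (Ico u v) μ := integrableOn_const hμ
  have hnonneg : 0 ≤ᵐ[μ.restrict (Ico u v)] fun x => g x - g u :=
    ae_restrict_of_forall_mem measurableSet_Ico fun x hx => sub_nonneg.2 <|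
      hmono.monotoneOn (left_mem_Icc.2 (hx.1.trans hx.2.le)) (Ico_subset_Icc_self hx) hx.1
  have hne : {x | ¬g x - g u = 0} ∩ Ico u v = Ioo u v := by
    ext x
    refine ⟨fun ⟨hx, hxI⟩ => ⟨lt_of_le_of_ne hxI.1 fun h => hx (by simp [← h]), hxI.2⟩,
      fun hx => ⟨sub_ne_zero.2 (hmono (left_mem_Icc.2 (hx.1.trans hx.2).le)
        (Ioo_subset_Icc_self hx) hx.1).ne', Ioo_subset_Ico_self hx⟩⟩
  rw [← sub_eq_zero, mul_comm, ← smul_eq_mul, ← setIntegral_const,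
    ← integral_sub hgi hci, setIntegral_eq_zero_iff_of_nonneg_ae hnonneg (hgi.sub hci),
    Filter.EventuallyEq, ae_iff, Measure.restrict_apply' measurableSet_Ico]
  simp only [Pi.zero_apply]
  rw [hne]

end MonotoneIntegral

def listSubtypeEquiv {α : Type*} (p : α → Prop) :
    {l : List α // ∀ x ∈ l, p x} ≃ List (Subtype p) where
  toFun l := l.1.attachWith p l.2
  invFun l := ⟨l.unattach, fun _ hx => by
    obtain ⟨⟨_, hy⟩, -, rfl⟩ := List.mem_map.1 hx
    exact hy⟩
  left_inv _ := Subtype.ext List.unattach_attachWith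
  right_inv _ := List.map_injective_iff.2 Subtype.val_injective List.unattach_attachWith

theorem tsum_pow_length {α : Type*} [Finite α] (r : ℝ≥0∞) :
    ∑' l : List α, r ^ l.length = (1 - Nat.card α * r)⁻¹ := by
  have := Fintype.ofFinite α
  rw [← List.equivSigmaTuple.symm.tsum_eq, ENNReal.tsum_sigma', ← ENNReal.tsum_geometric]
  refine tsum_congr fun n => ?_
  simp [List.equivSigmaTuple, mul_pow]

theorem tsum_pow_length_of_forall_mem {α : Type*} (p : α → Prop) [Finite (Subtype p)]
    (r : ℝ≥0∞) :
    ∑' l : {l : List α // ∀ x ∈ l, p x}, r ^ l.1.length = (1 - Nat.card (Subtype p) * r)⁻¹ := by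
  rw [← tsum_pow_length, ← (listSubtypeEquiv p).tsum_eq]
  simp [listSubtypeEquiv]

section KempnerMeasure

variable {b : ℕ} {E : Finset ℕ}

theorem dirac_zero_le_kempnerMeasure : Measure.dirac 0 ≤ kempnerMeasure b E := by
  refine le_trans ?_ (Measure.le_sum _ ⟨[], by simp⟩)
  simp

theorem kempnerMeasure_Ioo_eq_zero_iff :
    kempnerMeasure b E (Ioo 0 1) = 0 ↔ ∀ d, 0 < d → d < b → d ∈ E := by
  rw [kempnerMeasure, Measure.sum_apply_eq_zero' measurableSet_Ioo]
  simp only [Measure.smul_apply, smul_eq_mul, mul_eq_zero, ENNReal.inv_eq_zero,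
    ENNReal.pow_eq_top_iff, natCast_ne_top, false_and, false_or,
    Measure.dirac_apply' _ measurableSet_Ioo, indicator_apply_eq_zero, Pi.one_apply,
    one_ne_zero, imp_false, Subtype.forall]
  constructor
  · intro h d hd hdb
    by_contra hdE
    have hb : (0 : ℝ) < b := by exact_mod_cast hd.trans hdb
    refine h [d] (by simpa using ⟨hdb, hdE⟩) ?_
    simp only [Nat.ofDigits_singleton, List.length_singleton, pow_one, mem_Ioo]
    exact ⟨by positivity, (div_lt_one hb).2 (by exact_mod_cast hdb)⟩
  · intro h l hl hmem
    have hzero : l = List.replicate l.length 0 := List.eq_replicate_iff.2 ⟨rfl, fun d hd =>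
      by_contra fun hd0 => (hl d hd).2 (h d (Nat.pos_of_ne_zero hd0) (hl d hd).1)⟩
    rw [hzero, Nat.ofDigits_replicate_zero] at hmem
    simp at hmem

theorem kempnerMeasure_Ico (hb : 2 ≤ b) (hEsub : ∀ d ∈ E, d < b) :
    kempnerMeasure b E (Ico 0 1) = b / E.card := by
  have hmem : ∀ l : {l : List ℕ // ∀ d ∈ l, d < b ∧ d ∉ E},
      ((Nat.ofDigits b l.1 : ℕ) : ℝ) / (b : ℝ) ^ l.1.length ∈ Ico (0 : ℝ) 1 := fun l =>
    ⟨by positivity, (div_lt_one (by positivity)).2 <| by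
      exact_mod_cast Nat.ofDigits_lt_base_pow_length hb fun d hd => (l.2 d hd).1⟩
  have hEb : E ⊆ Finset.range b := fun d hd => Finset.mem_range.2 (hEsub d hd)
  let digitsEquiv : {d // d < b ∧ d ∉ E} ≃ {d // d ∈ Finset.range b \ E} :=
    Equiv.subtypeEquivRight fun d => by simp
  have : Finite {d // d < b ∧ d ∉ E} := .of_equiv _ digitsEquiv.symm
  have hcard : Nat.card {d // d < b ∧ d ∉ E} = b - E.card := by
    rw [Nat.card_congr digitsEquiv, Nat.card_eq_finsetCard, Finset.card_sdiff_of_subset hEb,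
      Finset.card_range]
  have hkb : E.card ≤ b := by simpa using Finset.card_le_card hEb
  have hb0 : (b : ℝ≥0∞) ≠ 0 := by exact_mod_cast (by omega : b ≠ 0)
  have hcompl : 1 - ((b - E.card : ℕ) : ℝ≥0∞) * (b : ℝ≥0∞)⁻¹ = E.card * (b : ℝ≥0∞)⁻¹ := by
    refine ENNReal.sub_eq_of_eq_add_rev (by finiteness) ?_
    rw [← add_mul, ← Nat.cast_add, Nat.sub_add_cancel hkb, ENNReal.mul_inv_cancel hb0 (by simp)]
  rw [kempnerMeasure, Measure.sum_apply _ measurableSet_Ico]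
  simp only [Measure.smul_apply, smul_eq_mul, Measure.dirac_apply_of_mem (hmem _), mul_one]
  simp_rw [ENNReal.inv_pow]
  rw [tsum_pow_length_of_forall_mem (fun d => d < b ∧ d ∉ E), hcard, hcompl,
    ENNReal.mul_inv (.inr (ENNReal.inv_ne_top.2 hb0)) (.inl (natCast_ne_top _)), inv_inv,
    ENNReal.div_eq_inv_mul]

end KempnerMeasure

theorem pos_of_mem_Eone {b : ℕ} {E : Finset ℕ} {a : ℕ} (hb : 0 < b) (ha : a ∈ Eone b E) :
    0 < a := by
  unfold Eone at ha
  split_ifs at ha with h0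
  · rcases Finset.mem_insert.1 ha with rfl | ha
    · exact hb
    · exact Nat.pos_of_ne_zero (Finset.ne_of_mem_erase ha)
  · exact Nat.pos_of_ne_zero fun h => h0 (h ▸ ha)

theorem digamma_bounds_per_digit (b : ℕ) (hb : 2 ≤ b) (E : Finset ℕ)
    (hE : E.Nonempty) (hEsub : ∀ d ∈ E, d < b) :
    ∀ a ∈ Eone b E,
      (digamma ((a : ℝ) / b) - digamma 1) / E.card ≤ sBE b E a ∧
      sBE b E a < (digamma (((a : ℝ) + 1) / b) - digamma 1) / E.card ∧
      ((digamma ((a : ℝ) / b) - digamma 1) / E.card = sBE b E a ↔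
        ∀ d : ℕ, 0 < d → d < b → d ∈ E) := by
  intro a ha
  set μ := kempnerMeasure b E
  set g : ℝ → ℝ := fun x => digamma ((a + x) / b) - digamma 1
  have hb0 : (0 : ℝ) < b := by positivity
  have ha0 : (0 : ℝ) < a := by exact_mod_cast pos_of_mem_Eone (by omega) ha
  have hmass : μ (Ico 0 1) = b / E.card := kempnerMeasure_Ico hb hEsub
  have hfin : μ (Ico 0 1) ≠ ⊤ := by
    rw [hmass]
    exact ENNReal.div_ne_top (ENNReal.natCast_ne_top b) (by exact_mod_cast hE.card_pos.ne')
  have hscale (c : ℝ) : c / E.card = 1 / b * (c * μ.real (Ico 0 1)) := by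
    rw [measureReal_def, hmass, ENNReal.toReal_div, ENNReal.toReal_natCast,
      ENNReal.toReal_natCast]
    field_simp
  have hmono : StrictMonoOn g (Icc 0 1) := fun x hx y hy hxy =>
    sub_lt_sub_right (digamma_strictMonoOn (div_pos (by linarith [hx.1]) hb0)
      (div_pos (by linarith [hy.1]) hb0)
      (div_lt_div_of_pos_right (by linarith) hb0)) _
  have hg : Measurable g :=
    ((measurable_deriv _).comp ((measurable_const.add measurable_id).div_const _)).sub_const _
  have hatom : μ {0} ≠ 0 :=
    (one_pos.trans_le (by simpa using dirac_zero_le_kempnerMeasure (b := b) (E := E) {0})).ne'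
  rw [show digamma ((a : ℝ) / b) - digamma 1 = g 0 by simp [g],
    show digamma (((a : ℝ) + 1) / b) - digamma 1 = g 1 from rfl, hscale, hscale]
  refine ⟨mul_le_mul_of_nonneg_left (mul_measureReal_le_setIntegral_Ico hfin hg hmono.monotoneOn)
      (by positivity),
    mul_lt_mul_of_pos_left (setIntegral_Ico_lt_mul_measureReal hfin hg hmono one_pos hatom)
      (by positivity), ?_⟩
  rw [sBE, mul_right_inj' (by positivity), eq_comm,
    setIntegral_Ico_eq_mul_measureReal_iff hfin hg hmono, kempnerMeasure_Ioo_eq_zero_iff]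
end

section
/- Let b ≥ 2 be an integer and E a nonempty set of base-b digits. Suppose a ∈ E is a positive digit with a < b−1 and a+1 ∉ E, and let E' = (E \ {a}) ∪ {a+1}. Then K(b,E) < K(b,E'). -/
open MeasureTheory Real ENNReal

/-!
Swapping the digits `a` and `a + 1` in base `b` is an involution of `ℕ` that carries the numbers
avoiding `E` onto those avoiding `E' = (E \ {a}) ∪ {a + 1}`. A number avoiding `E` has no digit `a`,
so the swap only turns digits `a + 1` into `a`: it never increases the number, and it sends `a + 1`
to `a`. Reindexing `K(b, E')` along the swap therefore dominates `K(b, E)` term by term, strictly at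
`a + 1`; the comparison is legitimate because `K(b, E')` converges, `E'` excluding a digit.
-/

open Finset Function

def mapDigits (b : ℕ) (g : ℕ → ℕ) (n : ℕ) : ℕ :=
  Nat.ofDigits b ((Nat.digits b n).map g)

section mapDigits

variable {b : ℕ} {g : ℕ → ℕ}

theorem ofDigits_map_le_ofDigits (b : ℕ) {L : List ℕ} (hg : ∀ d ∈ L, g d ≤ d) :
    Nat.ofDigits b (L.map g) ≤ Nat.ofDigits b L := by
  induction L with
  | nil => simp
  | cons d L ih =>
    simp only [List.map_cons, Nat.ofDigits_cons]
    gcongr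
    exacts [hg d List.mem_cons_self, ih fun x hx => hg x (List.mem_cons_of_mem _ hx)]

theorem mapDigits_le_self {n : ℕ} (hg : ∀ d ∈ Nat.digits b n, g d ≤ d) : mapDigits b g n ≤ n :=
  (ofDigits_map_le_ofDigits b hg).trans_eq (Nat.ofDigits_digits b n)

variable (hb : 1 < b) (hlt : ∀ d < b, g d < b) (h0 : ∀ d, d ≠ 0 → g d ≠ 0)
include hb hlt h0

theorem digits_mapDigits (n : ℕ) : Nat.digits b (mapDigits b g n) = (Nat.digits b n).map g := by
  refine Nat.digits_ofDigits b hb _ ?_ fun hne => ?_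
  · simp only [List.mem_map]
    rintro _ ⟨d, hd, rfl⟩
    exact hlt d (Nat.digits_lt_base hb hd)
  · rw [List.getLast_map]
    exact h0 _ (Nat.getLast_digit_ne_zero b (Nat.digits_ne_nil_iff_ne_zero.mp (by simpa using hne)))

theorem mapDigits_eq_zero_iff {n : ℕ} : mapDigits b g n = 0 ↔ n = 0 := by
  rw [← Nat.digits_eq_nil_iff_eq_zero, digits_mapDigits hb hlt h0, List.map_eq_nil_iff,
    Nat.digits_eq_nil_iff_eq_zero]

theorem mapDigits_involutive (hg : Involutive g) : Involutive (mapDigits b g) := fun n => by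
  rw [mapDigits, digits_mapDigits hb hlt h0, List.map_map, hg.comp_self, List.map_id,
    Nat.ofDigits_digits]

end mapDigits

theorem card_filter_digits_avoid_length_le {b : ℕ} (hb : 1 < b) {c : ℕ} (hc : c < b)
    (s : Finset ℕ) (k : ℕ) :
    #{n ∈ s | (∀ d ∈ Nat.digits b n, d ≠ c) ∧ (Nat.digits b n).length = k} ≤ (b - 1) ^ k := by
  classical
  calc _ ≤ #(Fintype.piFinset fun _ : Fin k => (range b).erase c) := by
        refine card_le_card_of_injOn (fun n i => (Nat.digits b n).getD i 0) ?_ ?_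
        · intro n hn
          simp only [coe_filter, Set.mem_ofPred_eq] at hn
          rw [mem_coe, Fintype.mem_piFinset]
          intro i
          have hi : (i : ℕ) < (Nat.digits b n).length := hn.2.2 ▸ i.2
          dsimp only
          rw [List.getD_eq_getElem _ _ hi]
          exact mem_erase.mpr ⟨hn.2.1 _ (List.getElem_mem hi),
            mem_range.mpr (Nat.digits_lt_base hb (List.getElem_mem hi))⟩
        · intro n hn m hm hnm
          simp only [coe_filter, Set.mem_ofPred_eq] at hn hm
          refine Nat.digits.injective b (List.ext_getElem (hn.2.2.trans hm.2.2.symm) ?_)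
          intro i hin him
          have := congrFun hnm ⟨i, hn.2.2 ▸ hin⟩
          dsimp only at this
          rwa [List.getD_eq_getElem _ _ hin, List.getD_eq_getElem _ _ him] at this
    _ = (b - 1) ^ k := by
        rw [Fintype.card_piFinset_const, card_erase_of_mem (mem_range.mpr hc), card_range]

theorem inv_le_base_mul_inv_pow_length {b n : ℕ} (hb : 1 < b) (hn : n ≠ 0) :
    (n : ℝ)⁻¹ ≤ b * (b : ℝ)⁻¹ ^ (Nat.digits b n).length := by
  have hpow : (b : ℝ) ^ (Nat.digits b n).length ≤ b * n := by
    exact_mod_cast Nat.base_pow_length_digits_le b n hb hn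
  have hb0 : (0 : ℝ) < b := by positivity
  have hn0 : (0 : ℝ) < n := by positivity
  rw [inv_pow, ← div_eq_mul_inv, inv_le_comm₀ hn0 (by positivity), inv_div, div_le_iff₀ hb0]
  linarith

noncomputable def kempnerTerm (b : ℕ) (E : Finset ℕ) (n : ℕ) : ℝ :=
  if n ≠ 0 ∧ ∀ d ∈ Nat.digits b n, d ∉ E then (n : ℝ)⁻¹ else 0

theorem kempnerSum_eq_tsum_kempnerTerm (b : ℕ) (E : Finset ℕ) :
    kempnerSum b E = ∑' n, kempnerTerm b E n := rfl

theorem kempnerTerm_nonneg (b : ℕ) (E : Finset ℕ) (n : ℕ) : 0 ≤ kempnerTerm b E n := by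
  unfold kempnerTerm
  split_ifs <;> positivity

theorem summable_inv_pow_length_avoid {b : ℕ} (hb : 1 < b) {c : ℕ} (hc : c < b) :
    Summable fun n => if ∀ d ∈ Nat.digits b n, d ≠ c then (b : ℝ)⁻¹ ^ (Nat.digits b n).length
      else 0 := by
  set r : ℝ := ((b - 1 : ℕ) : ℝ) * (b : ℝ)⁻¹
  have hr0 : 0 ≤ r := by positivity
  have hr1 : r < 1 := by
    simp only [r]
    rw [← div_eq_mul_inv, div_lt_one (by positivity)]
    exact_mod_cast Nat.sub_lt (by omega) one_pos
  refine summable_of_sum_range_le (c := ∑' k, r ^ k) (fun n => by split_ifs <;> positivity)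
    fun M => ?_
  have hlen : ∀ n ∈ range M, (Nat.digits b n).length ∈ range M := fun n hn =>
    mem_range.mpr (((Nat.digits_length_le_iff hb n).mpr (Nat.lt_pow_self hb)).trans_lt
      (mem_range.mp hn))
  rw [← sum_filter, ← sum_fiberwise_of_maps_to (fun n hn => hlen n (mem_filter.mp hn).1)]
  -- numbers of digit length `k` avoiding `c` contribute at most `r ^ k` in total
  calc _ ≤ ∑ k ∈ range M, r ^ k := by
        refine sum_le_sum fun k _ => ?_
        rw [sum_congr rfl fun n hn => by rw [(mem_filter.mp hn).2], sum_const, filter_filter,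
          nsmul_eq_mul, mul_pow, ← Nat.cast_pow]
        gcongr
        exact card_filter_digits_avoid_length_le hb hc _ k
    _ ≤ ∑' k, r ^ k := (summable_geometric_of_lt_one hr0 hr1).sum_le_tsum _ fun _ _ => by positivity

theorem summable_kempnerTerm {b : ℕ} (hb : 1 < b) {E : Finset ℕ} {c : ℕ} (hcE : c ∈ E)
    (hc : c < b) : Summable (kempnerTerm b E) := by
  refine ((summable_inv_pow_length_avoid hb hc).mul_left (b : ℝ)).of_nonneg_of_le
    (kempnerTerm_nonneg b E) fun n => ?_
  unfold kempnerTerm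
  split_ifs with hn havoid
  · exact inv_le_base_mul_inv_pow_length hb hn.1
  · exact absurd (fun d hd (hdc : d = c) => hn.2 d hd (hdc ▸ hcE)) havoid
  · positivity
  · simp

section involution

variable {b : ℕ} {g : ℕ → ℕ} (hb : 1 < b) (hlt : ∀ d < b, g d < b) (h0 : ∀ d, d ≠ 0 → g d ≠ 0)
  {E F : Finset ℕ} (hF : ∀ d, g d ∈ F ↔ d ∈ E)
include hb hlt h0 hF

theorem kempnerTerm_mapDigits (n : ℕ) :
    kempnerTerm b F (mapDigits b g n) =
      if n ≠ 0 ∧ ∀ d ∈ Nat.digits b n, d ∉ E then ((mapDigits b g n : ℕ) : ℝ)⁻¹ else 0 := by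
  simp only [kempnerTerm, ne_eq, mapDigits_eq_zero_iff hb hlt h0, digits_mapDigits hb hlt h0,
    List.mem_map, forall_exists_index, and_imp, forall_apply_eq_imp_iff₂, hF]

theorem kempnerSum_lt_kempnerSum_of_involutive (hg : Involutive g) (hle : ∀ d ∉ E, g d ≤ d)
    {c : ℕ} (hcF : c ∈ F) (hcb : c < b) {n₀ : ℕ} (hn₀ : n₀ ≠ 0 ∧ ∀ d ∈ Nat.digits b n₀, d ∉ E)
    (hlt₀ : mapDigits b g n₀ < n₀) :
    kempnerSum b E < kempnerSum b F := by
  let e := (mapDigits_involutive hb hlt h0 hg).toPerm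
  have hpos : ∀ {n}, n ≠ 0 → (0 : ℝ) < mapDigits b g n := fun hn =>
    Nat.cast_pos.mpr (Nat.pos_of_ne_zero ((mapDigits_eq_zero_iff hb hlt h0).not.mpr hn))
  have hsum : Summable (kempnerTerm b F ∘ e) :=
    e.summable_iff.mpr (summable_kempnerTerm hb hcF hcb)
  have hle_term : ∀ n, kempnerTerm b E n ≤ kempnerTerm b F (e n) := fun n => by
    change _ ≤ kempnerTerm b F (mapDigits b g n)
    rw [kempnerTerm_mapDigits hb hlt h0 hF, kempnerTerm]
    split_ifs with hn
    · exact inv_anti₀ (hpos hn.1)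
        (Nat.cast_le.mpr (mapDigits_le_self fun d hd => hle d (hn.2 d hd)))
    · exact le_rfl
  have hlt_term : kempnerTerm b E n₀ < kempnerTerm b F (e n₀) := by
    change _ < kempnerTerm b F (mapDigits b g n₀)
    rw [kempnerTerm_mapDigits hb hlt h0 hF, kempnerTerm, if_pos hn₀, if_pos hn₀]
    exact inv_strictAnti₀ (hpos hn₀.1) (Nat.cast_lt.mpr hlt₀)
  rw [kempnerSum_eq_tsum_kempnerTerm, kempnerSum_eq_tsum_kempnerTerm,
    ← e.tsum_eq (kempnerTerm b F)]
  exact Summable.tsum_lt_tsum_of_nonneg (kempnerTerm_nonneg b E) hle_term hlt_term hsum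

end involution

theorem kempner_digit_shift_general (b : ℕ) (hb : 2 ≤ b) (E : Finset ℕ)
    (a : ℕ) (haE : a ∈ E) (ha0 : 0 < a)
    (hab : a < b - 1) (ha1 : a + 1 ∉ E) :
    kempnerSum b E < kempnerSum b (insert (a + 1) (E.erase a)) := by
  have hswap : ∀ d, Equiv.swap a (a + 1) d = if d = a then a + 1 else if d = a + 1 then a else d :=
    fun d => Equiv.swap_apply_def a (a + 1) d
  have hdigits : Nat.digits b (a + 1) = [a + 1] := Nat.digits_of_lt b _ (by omega) (by omega)
  have hlt : ∀ d < b, Equiv.swap a (a + 1) d < b := fun d hd => by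
    rw [hswap]; split_ifs <;> omega
  have h0 : ∀ d, d ≠ 0 → Equiv.swap a (a + 1) d ≠ 0 := fun d hd => by
    rw [hswap]; split_ifs <;> omega
  have hF : ∀ d, Equiv.swap a (a + 1) d ∈ insert (a + 1) (E.erase a) ↔ d ∈ E := fun d => by
    rw [hswap]
    split_ifs with h h' <;> subst_vars <;> simp_all
  have hle : ∀ d ∉ E, Equiv.swap a (a + 1) d ≤ d := fun d hd => by
    have hda : d ≠ a := fun h => hd (h ▸ haE)
    rw [hswap]; split_ifs <;> omega
  refine kempnerSum_lt_kempnerSum_of_involutive (by omega) hlt h0 hF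
    (Equiv.swap_apply_self a (a + 1)) hle (mem_insert_self _ _) (by omega) (n₀ := a + 1)
    ⟨by omega, by simpa [hdigits] using ha1⟩ ?_
  simp [mapDigits, hdigits]

theorem kempner_digit_shift (b : ℕ) (hb : 2 ≤ b) (E : Finset ℕ)
    (hEsub : ∀ d ∈ E, d < b) (a : ℕ) (haE : a ∈ E) (ha0 : 0 < a)
    (hab : a < b - 1) (ha1 : a + 1 ∉ E) :
    kempnerSum b E < kempnerSum b (insert (a + 1) (E.erase a)) :=
  kempner_digit_shift_general b hb E a haE ha0 hab ha1
end

section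
/- Let b ≥ 2 be an integer and 1 ≤ p < b. Then K(b, {b−1, b−2, …, b−p}) < K(b, {0, b−1, b−2, …, b−p+1}); i.e., among the two candidate extremal excluded sets of cardinality p, the one containing 0 together with the p−1 largest digits gives the strictly larger Kempner sum. -/
open MeasureTheory Real ENNReal

/-!
Put `m = b - p`. Reading the base-`m` digits of `k` in base `b` enumerates the integers whose
base-`b` digits are all `< m`; reading instead the digits of `k` in bijective base `m` (digits in
`[1, m]`) enumerates those whose digits all lie in `[1, m]`. The second enumeration is termwise at
most the first, and at `k = m` it gives `m` against `b`, so the reciprocal series compare strictly.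
The second series converges since splitting off the last digit bounds its partial sums `S` by
`m (1 + S / b)`. When `m = 1` the first set contains no positive integer, so its sum is `0`.
-/

open Finset Function

namespace Nat

/-- The digits of `k` in bijective base `m`, least significant first; they lie in `[1, m]`. -/
def bijDigits (m k : ℕ) : List ℕ :=
  if k = 0 then [] else ((k - 1) % m + 1) :: bijDigits m ((k - 1) / m)
termination_by k
decreasing_by exact lt_of_le_of_lt (Nat.div_le_self _ _) (by omega)

@[simp]
lemma bijDigits_zero (m : ℕ) : bijDigits m 0 = [] := by
  rw [bijDigits, if_pos rfl]

lemma bijDigits_add_mul {m r : ℕ} (hr : 1 ≤ r) (hrm : r ≤ m) (q : ℕ) :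
    bijDigits m (r + m * q) = r :: bijDigits m q := by
  have hm : 0 < m := by omega
  rw [bijDigits, if_neg (by omega), show r + m * q - 1 = r - 1 + m * q by omega,
    Nat.add_mul_mod_self_left, Nat.add_mul_div_left _ _ hm, Nat.mod_eq_of_lt (by omega),
    Nat.div_eq_of_lt (by omega), Nat.sub_add_cancel hr, Nat.zero_add]

theorem bijective_digit_induction {m : ℕ} (hm : 1 ≤ m) {P : ℕ → Prop} (zero : P 0)
    (add_mul : ∀ r q, 1 ≤ r → r ≤ m → P q → P (r + m * q)) (k : ℕ) : P k := by
  induction k using Nat.strong_induction_on with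
  | _ k ih =>
    rcases k.eq_zero_or_pos with rfl | hk
    · exact zero
    · have hk' : k = ((k - 1) % m + 1) + m * ((k - 1) / m) := by
        have := Nat.mod_add_div (k - 1) m
        omega
      rw [hk']
      exact add_mul _ _ le_add_self (Nat.mod_lt _ hm)
        (ih _ (lt_of_le_of_lt (Nat.div_le_self _ _) (by omega)))

lemma mem_bijDigits {m k d : ℕ} (hm : 1 ≤ m) (hd : d ∈ bijDigits m k) :
    1 ≤ d ∧ d ≤ m := by
  induction k using bijective_digit_induction hm with
  | zero => simp at hd
  | add_mul r q hr hrm ih =>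
    rw [bijDigits_add_mul hr hrm, List.mem_cons] at hd
    rcases hd with rfl | hd
    exacts [⟨hr, hrm⟩, ih hd]

lemma ofDigits_bijDigits {m : ℕ} (hm : 1 ≤ m) (k : ℕ) : ofDigits m (bijDigits m k) = k := by
  induction k using bijective_digit_induction hm with
  | zero => simp
  | add_mul r q hr hrm ih => rw [bijDigits_add_mul hr hrm, ofDigits_cons, ih]

lemma bijDigits_ofDigits {m : ℕ} (L : List ℕ) (hL : ∀ d ∈ L, 1 ≤ d ∧ d ≤ m) :
    bijDigits m (ofDigits m L) = L := by
  induction L with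
  | nil => simp
  | cons d L ih =>
    have hd := hL d List.mem_cons_self
    rw [ofDigits_cons, bijDigits_add_mul hd.1 hd.2,
      ih fun e he => hL e (List.mem_cons_of_mem _ he)]

end Nat

open Nat

section Enumeration

variable {b m : ℕ}

lemma ofDigits_bijDigits_pos {k : ℕ} (hk : k ≠ 0) : 0 < ofDigits b (bijDigits m k) := by
  rw [bijDigits, if_neg hk, ofDigits_cons]
  omega

lemma ofDigits_bijDigits_le_ofDigits_digits (hm : 2 ≤ m) (hmb : m ≤ b) (k : ℕ) :
    ofDigits b (bijDigits m k) ≤ ofDigits b (digits m k) := by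
  -- The carry case `r = m` needs the comparison of `q` with `q + 1`.
  suffices h : ∀ k, ofDigits b (bijDigits m k) ≤ ofDigits b (digits m k) ∧
      ofDigits b (bijDigits m k) < ofDigits b (digits m (k + 1)) from (h k).1
  intro k
  induction k using bijective_digit_induction (by omega : 1 ≤ m) with
  | zero => simp [digits_of_lt m 1 one_ne_zero (by omega)]
  | add_mul r q hr hrm ih =>
    have hle := Nat.mul_le_mul_left b ih.1
    have hlt := Nat.mul_le_mul_left b (Nat.succ_le_of_lt ih.2)
    rw [Nat.mul_succ] at hlt
    rw [bijDigits_add_mul hr hrm, ofDigits_cons]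
    rcases hrm.lt_or_eq with hrm | rfl
    · rw [digits_add m (by omega) r q hrm (Or.inl (by omega)), ofDigits_cons]
      rcases (show r + 1 ≤ m from hrm).lt_or_eq with hr1 | hr1
      · rw [show r + m * q + 1 = r + 1 + m * q by ring,
          digits_add m (by omega) (r + 1) q hr1 (Or.inl (by omega)), ofDigits_cons]
        omega
      · rw [show r + m * q + 1 = 0 + m * (q + 1) by rw [← hr1]; ring,
          digits_add m (by omega) 0 (q + 1) (by omega) (Or.inr (by omega)), ofDigits_cons]
        omega
    · rw [show r + r * q = 0 + r * (q + 1) by ring,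
        show 0 + r * (q + 1) + 1 = 1 + r * (q + 1) by ring,
        digits_add r (by omega) 0 (q + 1) (by omega) (Or.inr (by omega)),
        digits_add r (by omega) 1 (q + 1) (by omega) (Or.inr (by omega)),
        ofDigits_cons, ofDigits_cons]
      omega

lemma sum_range_inv_ofDigits_bijDigits_le (hb : 0 < b) (hm : 1 ≤ m) (N : ℕ) :
    ∑ k ∈ range N, ((ofDigits b (bijDigits m k) : ℕ) : ℝ)⁻¹ ≤
      m * (1 + (∑ k ∈ range N, ((ofDigits b (bijDigits m k) : ℕ) : ℝ)⁻¹) / b) := by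
  set F : ℕ → ℝ := fun k => ((ofDigits b (bijDigits m k) : ℕ) : ℝ)⁻¹
  have hcover : range N ⊆ insert 0 ((Icc 1 m ×ˢ range N).image fun x => x.1 + m * x.2) := by
    intro k hk
    rcases eq_or_ne k 0 with rfl | hk0
    · exact mem_insert_self _ _
    refine mem_insert_of_mem (mem_image.2 ⟨((k - 1) % m + 1, (k - 1) / m), ?_, ?_⟩)
    · have := Nat.mod_lt (k - 1) hm
      have := Nat.div_le_self (k - 1) m
      simp only [mem_product, mem_Icc, mem_range] at hk ⊢
      omega
    · have := Nat.mod_add_div (k - 1) m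
      dsimp only
      omega
  have hterm : ∀ r ∈ Icc 1 m, ∀ q, F (r + m * q) ≤ (if q = 0 then 1 else 0) + F q / b := by
    intro r hr q
    rw [mem_Icc] at hr
    simp only [F, bijDigits_add_mul hr.1 hr.2, ofDigits_cons, Nat.cast_add, Nat.cast_mul]
    rcases eq_or_ne q 0 with rfl | hq
    · simpa using inv_le_one_of_one_le₀ (by exact_mod_cast hr.1)
    · have hpos : (0 : ℝ) < ofDigits b (bijDigits m q) := by
        exact_mod_cast ofDigits_bijDigits_pos hq
      rw [if_neg hq, zero_add, div_eq_inv_mul, ← mul_inv]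
      exact inv_anti₀ (by positivity) (by linarith)
  calc ∑ k ∈ range N, F k
      ≤ ∑ k ∈ insert 0 ((Icc 1 m ×ˢ range N).image fun x => x.1 + m * x.2), F k :=
        sum_le_sum_of_subset_of_nonneg hcover fun _ _ _ => by positivity
    _ = ∑ k ∈ (Icc 1 m ×ˢ range N).image fun x => x.1 + m * x.2, F k :=
        sum_insert_zero (by simp [F])
    _ ≤ ∑ x ∈ Icc 1 m ×ˢ range N, F (x.1 + m * x.2) :=
        sum_image_le_of_nonneg fun _ _ => by positivity
    _ = ∑ r ∈ Icc 1 m, ∑ q ∈ range N, F (r + m * q) := sum_product _ _ _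
    _ ≤ ∑ r ∈ Icc 1 m, ∑ q ∈ range N, ((if q = 0 then 1 else 0) + F q / b) :=
        sum_le_sum fun r hr => sum_le_sum fun q _ => hterm r hr q
    _ ≤ ∑ r ∈ Icc 1 m, (1 + (∑ k ∈ range N, F k) / b) := by
        refine sum_le_sum fun r _ => ?_
        rw [sum_add_distrib, sum_ite_eq', ← sum_div]
        gcongr
        split_ifs <;> norm_num
    _ = m * (1 + (∑ k ∈ range N, F k) / b) := by simp [mul_add]

lemma summable_inv_ofDigits_bijDigits (hm : 1 ≤ m) (hmb : m < b) :
    Summable fun k => ((ofDigits b (bijDigits m k) : ℕ) : ℝ)⁻¹ := by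
  have hb : (0 : ℝ) < b := by exact_mod_cast (by omega : 0 < b)
  have hmbR : (m : ℝ) < b := by exact_mod_cast hmb
  refine summable_of_sum_range_le (c := m * b / (b - m)) (fun _ => by positivity) fun N => ?_
  have key := sum_range_inv_ofDigits_bijDigits_le (by omega : 0 < b) hm N
  set S := ∑ k ∈ range N, ((ofDigits b (bijDigits m k) : ℕ) : ℝ)⁻¹
  have hexpand : m * (1 + S / b) * b = m * b + m * S := by field_simp
  rw [le_div_iff₀ (by linarith)]
  linarith [mul_le_mul_of_nonneg_right key hb.le]

lemma tsum_inv_ofDigits_digits_lt (hm : 2 ≤ m) (hmb : m < b) :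
    ∑' k, ((ofDigits b (digits m k) : ℕ) : ℝ)⁻¹ <
      ∑' k, ((ofDigits b (bijDigits m k) : ℕ) : ℝ)⁻¹ := by
  have hsum := summable_inv_ofDigits_bijDigits (by omega : 1 ≤ m) hmb
  have hle : ∀ k, ((ofDigits b (digits m k) : ℕ) : ℝ)⁻¹ ≤
      ((ofDigits b (bijDigits m k) : ℕ) : ℝ)⁻¹ := by
    intro k
    rcases eq_or_ne k 0 with rfl | hk
    · simp
    · exact inv_anti₀ (by exact_mod_cast ofDigits_bijDigits_pos hk)
        (by exact_mod_cast ofDigits_bijDigits_le_ofDigits_digits hm hmb.le k)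
  have hlt_at_m : ((ofDigits b (digits m m) : ℕ) : ℝ)⁻¹ <
      ((ofDigits b (bijDigits m m) : ℕ) : ℝ)⁻¹ := by
    have hdig : digits m m = [0, 1] := by
      simpa [digits_of_lt m 1 one_ne_zero (by omega)] using
        digits_add m (by omega) 0 1 (by omega) (Or.inr one_ne_zero)
    have hbij : bijDigits m m = [m] := by
      simpa using bijDigits_add_mul (m := m) (by omega) le_rfl 0
    rw [hdig, hbij]
    simpa [Nat.ofDigits] using
      inv_strictAnti₀ (by exact_mod_cast (by omega : 0 < m)) (by exact_mod_cast hmb)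
  exact Summable.tsum_lt_tsum hle hlt_at_m (hsum.of_nonneg_of_le (fun _ => by positivity) hle) hsum

lemma kempnerSum_eq_tsum_of_injective {E : Finset ℕ} {σ : ℕ → ℕ} (hσ : Injective σ)
    (hσE : ∀ k, ∀ d ∈ digits b (σ k), d ∉ E)
    (hE : ∀ n ≠ 0, (∀ d ∈ digits b n, d ∉ E) → n ∈ Set.range σ) :
    kempnerSum b E = ∑' k, ((σ k : ℕ) : ℝ)⁻¹ := by
  rw [kempnerSum, ← hσ.tsum_eq]
  · refine tsum_congr fun k => ?_
    by_cases h : σ k = 0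
    · simp [h]
    · rw [if_pos ⟨h, hσE k⟩]
  · intro n hn
    rw [Function.mem_support, ne_eq, ite_eq_right_iff, not_forall] at hn
    obtain ⟨⟨hn0, hdig⟩, -⟩ := hn
    exact hE n hn0 hdig

lemma kempnerSum_eq_zero_of_Ico_one_subset {E : Finset ℕ} (hb : 1 < b) (hE : Ico 1 b ⊆ E) :
    kempnerSum b E = 0 := by
  refine (tsum_congr fun n => if_neg ?_).trans tsum_zero
  rintro ⟨hn, hdig⟩
  have hlast := List.getLast_mem ((digits_ne_nil_iff_ne_zero (b := b)).mpr hn)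
  refine hdig _ hlast (hE (mem_Ico.2 ⟨?_, digits_lt_base hb hlast⟩))
  exact Nat.one_le_iff_ne_zero.2 (getLast_digit_ne_zero b hn)

lemma digits_ofDigits_digits (hm : 2 ≤ m) (hmb : m ≤ b) (k : ℕ) :
    digits b (ofDigits b (digits m k)) = digits m k :=
  digits_ofDigits b (by omega) _ (fun _ hd => (digits_lt_base hm hd).trans_le hmb)
    fun _ => getLast_digit_ne_zero m fun hk => by simp_all

lemma kempnerSum_Ico_eq_tsum (hm : 2 ≤ m) (hmb : m ≤ b) :
    kempnerSum b (Ico m b) = ∑' k, ((ofDigits b (digits m k) : ℕ) : ℝ)⁻¹ := by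
  refine kempnerSum_eq_tsum_of_injective (fun k l h => ?_) (fun k d hd => ?_) fun n _ hn => ?_
  · simpa [digits_ofDigits_digits hm hmb, ofDigits_digits] using
      congrArg (fun n => ofDigits m (digits b n)) h
  · rw [digits_ofDigits_digits hm hmb] at hd
    simp [digits_lt_base hm hd]
  · have hdig : ∀ d ∈ digits b n, d < m := fun d hd => by
      have hdE := hn d hd
      have hdb := digits_lt_base (by omega) hd
      simp only [mem_Ico, not_and, not_lt] at hdE
      omega
    refine ⟨ofDigits m (digits b n), ?_⟩
    dsimp only
    rw [digits_ofDigits m (by omega) _ hdig (fun _ => getLast_digit_ne_zero b ‹_›),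
      ofDigits_digits]

lemma digits_ofDigits_bijDigits (hm : 1 ≤ m) (hmb : m < b) (k : ℕ) :
    digits b (ofDigits b (bijDigits m k)) = bijDigits m k :=
  digits_ofDigits b (by omega) _ (fun _ hd => (mem_bijDigits hm hd).2.trans_lt hmb)
    fun h => (Nat.one_le_iff_ne_zero.1 (mem_bijDigits hm (List.getLast_mem h)).1)

lemma kempnerSum_insert_zero_Ico_eq_tsum (hm : 1 ≤ m) (hmb : m < b) :
    kempnerSum b (insert 0 (Ico (m + 1) b)) =
      ∑' k, ((ofDigits b (bijDigits m k) : ℕ) : ℝ)⁻¹ := by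
  refine kempnerSum_eq_tsum_of_injective (fun k l h => ?_) (fun k d hd => ?_) fun n _ hn => ?_
  · simpa [digits_ofDigits_bijDigits hm hmb, ofDigits_bijDigits hm] using
      congrArg (fun n => ofDigits m (digits b n)) h
  · rw [digits_ofDigits_bijDigits hm hmb] at hd
    have := mem_bijDigits hm hd
    simp only [mem_insert, mem_Ico, not_or]
    omega
  · have hdig : ∀ d ∈ digits b n, 1 ≤ d ∧ d ≤ m := fun d hd => by
      have hdE := hn d hd
      have hdb := digits_lt_base (by omega) hd
      simp only [mem_insert, mem_Ico, not_or, not_and, not_lt] at hdE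
      omega
    refine ⟨ofDigits m (digits b n), ?_⟩
    dsimp only
    rw [bijDigits_ofDigits _ hdig, ofDigits_digits]

end Enumeration

theorem kempner_U_lt_T_general (b : ℕ) (p : ℕ) (hp : 1 ≤ p) (hpb : p < b) :
    kempnerSum b (Finset.Ico (b - p) b) <
      kempnerSum b (insert 0 (Finset.Ico (b - p + 1) b)) := by
  have hm : 1 ≤ b - p := by omega
  have hmb : b - p < b := by omega
  rw [kempnerSum_insert_zero_Ico_eq_tsum hm hmb]
  rcases hm.eq_or_lt with hm1 | hm2
  · rw [kempnerSum_eq_zero_of_Ico_one_subset (by omega) (by rw [← hm1])]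
    exact (summable_inv_ofDigits_bijDigits hm hmb).tsum_pos (fun _ => by positivity) 1
      (inv_pos.2 (by exact_mod_cast ofDigits_bijDigits_pos one_ne_zero))
  · rw [kempnerSum_Ico_eq_tsum hm2 hmb.le]
    exact tsum_inv_ofDigits_digits_lt hm2 hmb

theorem kempner_U_lt_T (b : ℕ) (hb : 2 ≤ b) (p : ℕ) (hp : 1 ≤ p) (hpb : p < b) :
    kempnerSum b (Finset.Ico (b - p) b) <
      kempnerSum b (insert 0 (Finset.Ico (b - p + 1) b)) :=
  kempner_U_lt_T_general b p hp hpb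
end

section
/- Let b ≥ 2 be an integer and let E ⊆ {0, …, b−1} be a set of excluded digits of cardinality p with 1 ≤ p < b. Then K(b,E) ≤ K(b, {0, b−1, b−2, …, b−p+1}), with equality if and only if E = {0, b−1, b−2, …, b−p+1}. -/
open MeasureTheory Real ENNReal

/-!
Let `A = {0, …, b-1} \ E` be the allowed digits, `a = #A`, and `N_A(x)` the number of `n < x`
all of whose digits lie in `A` (including `n = 0`, which has no digits). Writing `n = b q + d`
gives `N_A(x) = [0 ∉ A, 0 < x] + ∑_{d ∈ A} N_A(⌈(x - d) / b⌉)`. The terms are antitone in `d`,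
so matching the digits of `A` in increasing order with `1, …, a` (and, when `0 ∈ A`, the digit
`0` with `a`) proves `N_A ≤ N_{1..a}` by strong induction, strictly at `x = a + 1` unless
`A = {1, …, a}`. Summation by parts, `∑ 1/n = ∑_y #{n ≤ y} (1/y - 1/(y+1))`, turns this into the
comparison of the reciprocal sums, and the sum for `{1, …, a}` is finite because at most
`a^(k+1)` of its terms lie in `[b^k, b^(k+1))`.
-/

namespace Kempner

open Finset Nat

section ReciprocalSum

open Filter Topology

theorem hasSum_sub_succ_of_antitone {u : ℕ → ℝ} {l : ℝ} (hu : Antitone u)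
    (hl : Tendsto u atTop (𝓝 l)) : HasSum (fun k => u k - u (k + 1)) (u 0 - l) := by
  rw [hasSum_iff_tendsto_nat_of_nonneg fun k => sub_nonneg.2 (hu k.le_succ)]
  simpa only [Finset.sum_range_sub'] using tendsto_const_nhds.sub hl

noncomputable def abelWeight (y : ℕ) : ℝ≥0∞ := ENNReal.ofReal ((y : ℝ)⁻¹ - ((y : ℝ) + 1)⁻¹)

theorem abelWeight_pos {y : ℕ} (hy : y ≠ 0) : 0 < abelWeight y :=
  ENNReal.ofReal_pos.2 (sub_pos.2 (inv_strictAnti₀ (Nat.cast_pos.2 (Nat.pos_of_ne_zero hy))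
    (lt_add_one _)))

theorem inv_natCast_eq_tsum_abelWeight {n : ℕ} (hn : n ≠ 0) :
    (n : ℝ≥0∞)⁻¹ = ∑' y, if n ≤ y then abelWeight y else 0 := by
  set w : ℕ → ℝ := fun y => if n ≤ y then (y : ℝ)⁻¹ - ((y : ℝ) + 1)⁻¹ else 0
  have hw : 0 ≤ w := fun y => by
    dsimp only [w]
    split_ifs with h
    · exact sub_nonneg.2 (inv_anti₀ (Nat.cast_pos.2 (by omega)) (by linarith))
    · rfl
  have hsum : HasSum w (n : ℝ)⁻¹ := by
    rw [← hasSum_nat_add_iff' n]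
    have := hasSum_sub_succ_of_antitone (u := fun k : ℕ => ((k + n : ℕ) : ℝ)⁻¹) (l := 0)
      (fun i j hij => by dsimp only; gcongr)
      (tendsto_inv_atTop_zero.comp (tendsto_natCast_atTop_atTop.comp (tendsto_add_atTop_nat n)))
    simpa [w, Finset.sum_eq_zero (fun i hi => if_neg (by simpa using hi) : ∀ i ∈ range n, w i = 0),
      add_assoc, add_comm (1 : ℝ)] using this
  rw [← ENNReal.ofReal_natCast, ← ENNReal.ofReal_inv_of_pos (by positivity), ← hsum.tsum_eq,
    ENNReal.ofReal_tsum_of_nonneg hw hsum.summable]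
  congr! 2 with y
  split_ifs <;> simp [w, abelWeight, *]

noncomputable def reciprocalSum (p : ℕ → Prop) [DecidablePred p] : ℝ≥0∞ :=
  ∑' n, if n ≠ 0 ∧ p n then (n : ℝ≥0∞)⁻¹ else 0

variable {p q : ℕ → Prop} [DecidablePred p] [DecidablePred q]

theorem reciprocalSum_eq_tsum_count :
    reciprocalSum p = ∑' y, (count (fun k => p (k + 1)) y : ℝ≥0∞) * abelWeight y := by
  calc reciprocalSum p
      = ∑' n, ∑' y, if (n ≠ 0 ∧ p n) ∧ n ≤ y then abelWeight y else 0 := by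
        refine tsum_congr fun n => ?_
        split_ifs with h
        · rw [inv_natCast_eq_tsum_abelWeight h.1]
          simp only [h, ne_eq, not_false_eq_true, and_self, true_and]
        · simp [h]
    _ = ∑' y, ∑' n, if (n ≠ 0 ∧ p n) ∧ n ≤ y then abelWeight y else 0 := ENNReal.tsum_comm
    _ = _ := tsum_congr fun y => by
        rw [tsum_eq_sum (s := range (y + 1)) fun n hn =>
            if_neg fun h => hn (mem_range.2 (by omega)),
          sum_range_succ', count_eq_card_filter_range, card_filter, Nat.cast_sum, sum_mul,
          if_neg fun h => h.1.1 rfl, add_zero]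
        refine sum_congr rfl fun k hk => ?_
        have : k + 1 ≤ y := mem_range.1 hk
        split_ifs <;> simp_all

theorem reciprocalSum_le_of_count_le
    (h : ∀ x, count (fun k => p (k + 1)) x ≤ count (fun k => q (k + 1)) x) :
    reciprocalSum p ≤ reciprocalSum q := by
  rw [reciprocalSum_eq_tsum_count, reciprocalSum_eq_tsum_count]
  exact ENNReal.tsum_le_tsum fun y => mul_le_mul_left (Nat.cast_le.2 (h y)) _

theorem reciprocalSum_lt_of_count_lt
    (h : ∀ x, count (fun k => p (k + 1)) x ≤ count (fun k => q (k + 1)) x) {x : ℕ}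
    (hx : count (fun k => p (k + 1)) x < count (fun k => q (k + 1)) x)
    (hq : reciprocalSum q ≠ ∞) : reciprocalSum p < reciprocalSum q := by
  have hx0 : x ≠ 0 := by
    rintro rfl
    simp at hx
  have hle y : (count (fun k => p (k + 1)) y : ℝ≥0∞) * abelWeight y
      ≤ count (fun k => q (k + 1)) y * abelWeight y := mul_le_mul_left (Nat.cast_le.2 (h y)) _
  rw [reciprocalSum_eq_tsum_count] at hq
  rw [reciprocalSum_eq_tsum_count, reciprocalSum_eq_tsum_count]
  exact ENNReal.tsum_lt_tsum (ne_top_of_le_ne_top hq (ENNReal.tsum_le_tsum hle)) hle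
    (ENNReal.mul_lt_mul_left (abelWeight_pos hx0).ne' ENNReal.ofReal_ne_top (Nat.cast_lt.2 hx))

theorem sum_Ico_le_count_sub_mul {m N : ℕ} (hmN : m ≤ N) :
    ∑ n ∈ Ico m N, (if n ≠ 0 ∧ p n then (n : ℝ≥0∞)⁻¹ else 0)
      ≤ ((count p N - count p m : ℕ) : ℝ≥0∞) * (m : ℝ≥0∞)⁻¹ := by
  obtain ⟨k, rfl⟩ := Nat.exists_eq_add_of_le hmN
  rw [sum_Ico_eq_sum_range, add_tsub_cancel_left, count_add, add_tsub_cancel_left,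
    count_eq_card_filter_range, card_filter, Nat.cast_sum, sum_mul]
  refine sum_le_sum fun j _ => ?_
  split_ifs <;> simp_all

theorem reciprocalSum_le_tsum_count_pow {b : ℕ} (hb : 1 < b) :
    reciprocalSum p ≤
      ∑' k, ((count p (b ^ (k + 1)) - count p (b ^ k) : ℕ) : ℝ≥0∞) * ((b : ℝ≥0∞) ^ k)⁻¹ := by
  rw [reciprocalSum, ENNReal.tsum_eq_iSup_nat' (tendsto_pow_atTop_atTop_of_one_lt hb)]
  refine iSup_le fun L => le_trans ?_ (ENNReal.sum_le_tsum (range L))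
  induction L with
  | zero => simp
  | succ L ih =>
    rw [← sum_range_add_sum_Ico _ (Nat.pow_le_pow_right (by omega) L.le_succ), sum_range_succ]
    gcongr
    exact_mod_cast sum_Ico_le_count_sub_mul (Nat.pow_le_pow_right (by omega) L.le_succ)

end ReciprocalSum

theorem sum_le_sum_Ico_of_antitone {M : Type*} [AddCommMonoid M] [PartialOrder M]
    [IsOrderedAddMonoid M] {f : ℕ → M} (hf : Antitone f) {k : ℕ} (s : Finset ℕ)
    (hs : ∀ d ∈ s, k ≤ d) : ∑ d ∈ s, f d ≤ ∑ i ∈ Ico k (#s + k), f i := by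
  induction s using Finset.induction_on_max with
  | empty => simp
  | insert m s hlt ih =>
    have hm : m ∉ s := fun h => (hlt m h).false
    have hsm : #s + k ≤ m := by
      have : s ⊆ Ico k m := fun d hd => mem_Ico.2 ⟨hs d (mem_insert_of_mem hd), hlt d hd⟩
      have := card_le_card this
      have := hs m (mem_insert_self m s)
      simp only [card_Ico] at *
      omega
    rw [sum_insert hm, card_insert_of_notMem hm, add_right_comm, sum_Ico_succ_top (by omega),
      add_comm]
    exact add_le_add (ih fun d hd => hs d (mem_insert_of_mem hd)) (hf hsm)

theorem count_le_count_sub_one_add_one (p : ℕ → Prop) [DecidablePred p] (n : ℕ) :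
    count p n ≤ count p (n - 1) + 1 := by
  rcases n with _ | n
  · simp
  · rw [count_succ, Nat.add_sub_cancel]
    split_ifs <;> omega

section CeilDiv

variable {b : ℕ}

theorem lt_ceilDiv_iff (hb : 0 < b) {x d q : ℕ} : q < (x - d) ⌈/⌉ b ↔ b * q + d < x := by
  rw [← not_le, ceilDiv_le_iff_le_mul hb]
  omega

theorem ceilDiv_lt_self (hb : 1 < b) {x : ℕ} (hx : 2 ≤ x) (d : ℕ) : (x - d) ⌈/⌉ b < x := by
  rw [Nat.lt_iff_le_pred (by omega), ceilDiv_le_iff_le_mul (by omega)]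
  calc x - d ≤ 2 * (x - 1) := by omega
    _ ≤ b * (x - 1) := Nat.mul_le_mul_right _ hb

theorem ceilDiv_le_ceilDiv_sub_add_one {x d : ℕ} (hdb : d < b) :
    x ⌈/⌉ b ≤ (x - d) ⌈/⌉ b + 1 := by
  have := le_smul_ceilDiv (a := b) (b := x - d) (by omega)
  rw [smul_eq_mul] at this
  rw [ceilDiv_le_iff_le_mul (by omega), mul_add_one]
  omega

theorem mul_sub_ceilDiv {d : ℕ} (hdb : d < b) (m : ℕ) : (b * m - d) ⌈/⌉ b = m := by
  refine le_antisymm ((ceilDiv_le_iff_le_mul (by omega)).2 (Nat.sub_le _ _)) ?_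
  rcases m with _ | m
  · exact Nat.zero_le _
  · rw [Nat.add_one_le_iff, lt_ceilDiv_iff (by omega), mul_add_one]
    omega

end CeilDiv

def DigitsIn (b : ℕ) (A : Finset ℕ) (n : ℕ) : Prop := ∀ d ∈ b.digits n, d ∈ A

instance (b : ℕ) (A : Finset ℕ) : DecidablePred (DigitsIn b A) :=
  fun n => inferInstanceAs (Decidable (∀ d ∈ b.digits n, d ∈ A))

variable {b : ℕ} {A : Finset ℕ}

theorem digitsIn_zero : DigitsIn b A 0 := by simp [DigitsIn]

theorem digitsIn_iff (hb : 1 < b) {n : ℕ} :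
    DigitsIn b A n ↔ n = 0 ∨ (n % b ∈ A ∧ DigitsIn b A (n / b)) := by
  rcases Nat.eq_zero_or_pos n with rfl | hn
  · simp [digitsIn_zero]
  · simp [DigitsIn, Nat.digits_def' hb hn, hn.ne']

theorem digitsIn_iff_of_lt (hb : 1 < b) {n : ℕ} (hn : n < b) :
    DigitsIn b A n ↔ n = 0 ∨ n ∈ A := by
  rw [digitsIn_iff hb, Nat.mod_eq_of_lt hn, Nat.div_eq_of_lt hn]
  simp [digitsIn_zero]

theorem count_digitsIn_of_le_one {x : ℕ} (hx : x ≤ 1) : count (DigitsIn b A) x = x :=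
  count_of_forall fun n hn => by
    obtain rfl : n = 0 := by omega
    exact digitsIn_zero

theorem count_digitsIn_succ (x : ℕ) :
    count (DigitsIn b A) (x + 1) = count (fun k => DigitsIn b A (k + 1)) x + 1 := by
  simp [count_succ', digitsIn_zero]

theorem count_mod_mem_and_div {q : ℕ → Prop} [DecidablePred q] (hb : 0 < b)
    (hA : A ⊆ range b) (x : ℕ) :
    count (fun n => n % b ∈ A ∧ q (n / b)) x = ∑ d ∈ A, count q ((x - d) ⌈/⌉ b) := by
  simp only [count_eq_card_filter_range]
  rw [← card_sigma]
  have hdb : ∀ d ∈ A, d < b := fun d hd => mem_range.1 (hA hd)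
  refine card_nbij' (fun n => ⟨n % b, n / b⟩) (fun q => b * q.2 + q.1) ?_ ?_ ?_ ?_
  · intro n hn
    simp only [coe_filter, mem_range, Set.mem_ofPred_eq] at hn
    simp only [coe_sigma, Set.mem_sigma_iff, mem_coe, coe_filter, mem_range, Set.mem_ofPred_eq,
      lt_ceilDiv_iff hb, Nat.div_add_mod]
    exact ⟨hn.2.1, hn.1, hn.2.2⟩
  · rintro ⟨d, q⟩ hq
    simp only [coe_sigma, Set.mem_sigma_iff, mem_coe, coe_filter, mem_range, Set.mem_ofPred_eq,
      lt_ceilDiv_iff hb] at hq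
    simp [Nat.mul_add_div hb, Nat.mod_eq_of_lt (hdb d hq.1), Nat.div_eq_of_lt (hdb d hq.1), hq]
  · intro n _
    exact Nat.div_add_mod n b
  · rintro ⟨d, q⟩ hq
    simp only [coe_sigma, Set.mem_sigma_iff] at hq
    simp [Nat.mul_add_div hb, Nat.mod_eq_of_lt (hdb d hq.1), Nat.div_eq_of_lt (hdb d hq.1)]

theorem count_digitsIn_eq_sum (hb : 1 < b) (hA : A ⊆ range b) (x : ℕ) :
    count (DigitsIn b A) x
      = (if 0 < x ∧ 0 ∉ A then 1 else 0) + ∑ d ∈ A, count (DigitsIn b A) ((x - d) ⌈/⌉ b) := by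
  have hsplit : count (DigitsIn b A) x
      = count (fun n => n = 0 ∧ 0 ∉ A) x + count (fun n => n % b ∈ A ∧ DigitsIn b A (n / b)) x := by
    simp only [count_eq_card_filter_range]
    rw [← card_union_of_disjoint (disjoint_filter.2 fun n _ h h' => by simp_all), ← filter_or]
    refine congrArg card (filter_congr fun n _ => ?_)
    rw [digitsIn_iff hb]
    rcases eq_or_ne n 0 with rfl | hn <;> by_cases h0 : 0 ∈ A <;> simp [*, digitsIn_zero]
  have hzero : count (fun n => n = 0 ∧ 0 ∉ A) x = if 0 < x ∧ 0 ∉ A then 1 else 0 := by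
    rcases x with _ | x <;> by_cases h0 : 0 ∈ A <;> simp [count_succ', h0]
  rw [hsplit, hzero, count_mod_mem_and_div (by omega) hA]

theorem count_digitsIn_le_count_digitsIn_Icc (hb : 1 < b) (hA : A ⊆ range b) (hAb : #A < b)
    (x : ℕ) : count (DigitsIn b A) x ≤ count (DigitsIn b (Icc 1 #A)) x := by
  induction x using Nat.strong_induction_on with
  | _ x ih =>
  rcases lt_or_ge x 2 with hx | hx
  · rw [count_digitsIn_of_le_one (by omega), count_digitsIn_of_le_one (by omega)]
  set f : ℕ → ℕ := fun i => count (DigitsIn b (Icc 1 #A)) ((x - i) ⌈/⌉ b)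
  have hf : Antitone f := fun i j hij =>
    count_monotone _ ((gc_mul_ceilDiv (by omega : 0 < b)).monotone_l (Nat.sub_le_sub_left hij x))
  have hrec d : count (DigitsIn b A) ((x - d) ⌈/⌉ b) ≤ f d := ih _ (ceilDiv_lt_self hb hx d)
  have hstar : count (DigitsIn b (Icc 1 #A)) x = 1 + ∑ i ∈ Ico 1 (#A + 1), f i := by
    rw [count_digitsIn_eq_sum hb (fun i hi => mem_range.2 (by simp at hi; omega)),
      if_pos ⟨by omega, by simp⟩, Ico_add_one_right_eq_Icc]
  rw [hstar, count_digitsIn_eq_sum hb hA]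
  by_cases h0 : 0 ∈ A
  · have htop : count (DigitsIn b A) (x ⌈/⌉ b) ≤ f #A + 1 := by
      have hlt : x ⌈/⌉ b < x := by simpa using ceilDiv_lt_self hb hx 0
      have hle : x ⌈/⌉ b ≤ (x - #A) ⌈/⌉ b + 1 := ceilDiv_le_ceilDiv_sub_add_one hAb
      calc count (DigitsIn b A) (x ⌈/⌉ b)
          ≤ count (DigitsIn b A) (x ⌈/⌉ b - 1) + 1 := count_le_count_sub_one_add_one _ _
        _ ≤ count (DigitsIn b (Icc 1 #A)) (x ⌈/⌉ b - 1) + 1 :=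
          Nat.add_le_add_right (ih _ (by omega)) 1
        _ ≤ f #A + 1 := Nat.add_le_add_right (count_monotone _ (by omega)) 1
    have hrest : ∑ d ∈ A.erase 0, count (DigitsIn b A) ((x - d) ⌈/⌉ b) ≤ ∑ i ∈ Ico 1 #A, f i := by
      refine (sum_le_sum fun d _ => hrec d).trans ?_
      have := sum_le_sum_Ico_of_antitone hf (k := 1) (A.erase 0) fun d hd =>
        pos_of_ne_zero (ne_of_mem_erase hd)
      rwa [card_erase_of_mem h0, Nat.sub_add_cancel (card_pos.2 ⟨0, h0⟩)] at this
    rw [if_neg fun h => h.2 h0, zero_add, ← add_sum_erase A _ h0,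
      sum_Ico_succ_top (show 1 ≤ #A from card_pos.2 ⟨0, h0⟩) f]
    simp only [Nat.sub_zero] at htop ⊢
    omega
  · rw [if_pos ⟨by omega, h0⟩]
    exact Nat.add_le_add_left ((sum_le_sum fun d _ => hrec d).trans
      (sum_le_sum_Ico_of_antitone hf (k := 1) A fun d hd =>
        pos_of_ne_zero (ne_of_mem_of_not_mem hd h0))) 1

theorem count_digitsIn_lt_count_digitsIn_Icc (hb : 1 < b) (hAb : #A < b) (hne : A ≠ Icc 1 #A) :
    count (DigitsIn b A) (#A + 1) < count (DigitsIn b (Icc 1 #A)) (#A + 1) := by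
  have hstar : count (DigitsIn b (Icc 1 #A)) (#A + 1) = #A + 1 :=
    count_of_forall fun n hn => (digitsIn_iff_of_lt hb (by omega)).2 (by
      rcases n with _ | n
      · exact Or.inl rfl
      · exact Or.inr (mem_Icc.2 ⟨by omega, by omega⟩))
  rw [hstar]
  refine lt_of_le_of_ne (count_le _) fun h =>
    hne (eq_of_subset_of_card_le (fun d hd => ?_) (by simp)).symm
  obtain ⟨hd1, hdA⟩ := mem_Icc.1 hd
  exact ((digitsIn_iff_of_lt hb (by omega)).1 (count_iff_forall.1 h d (by omega))).resolve_left
    (by omega)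

theorem count_digitsIn_pow_succ (hb : 1 < b) (hA : A ⊆ range b) (L : ℕ) :
    count (DigitsIn b A) (b ^ (L + 1))
      = (if 0 ∉ A then 1 else 0) + #A * count (DigitsIn b A) (b ^ L) := by
  rw [count_digitsIn_eq_sum hb hA, pow_succ', sum_congr rfl fun d hd => by
    rw [mul_sub_ceilDiv (mem_range.1 (hA hd))], sum_const, smul_eq_mul]
  simp [pos_of_ne_zero (by positivity : b * b ^ L ≠ 0)]

theorem count_digitsIn_pow_succ_le (hb : 1 < b) (hA : A ⊆ range b) (L : ℕ) :
    count (DigitsIn b A) (b ^ (L + 1)) ≤ count (DigitsIn b A) (b ^ L) + #A ^ (L + 1) := by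
  induction L with
  | zero =>
    rw [count_digitsIn_pow_succ hb hA, pow_zero, count_digitsIn_of_le_one le_rfl]
    split_ifs <;> simp
  | succ L ih =>
    have hL := count_digitsIn_pow_succ hb hA L
    have := Nat.mul_le_mul_left #A ih
    rw [mul_add] at this
    rw [count_digitsIn_pow_succ hb hA (L + 1), pow_succ' #A (L + 1)]
    split_ifs at hL ⊢ <;> omega

theorem reciprocalSum_digitsIn_ne_top (hb : 1 < b) (hA : A ⊆ range b) (hAb : #A < b) :
    reciprocalSum (DigitsIn b A) ≠ ∞ := by
  have hr : (#A : ℝ≥0∞) * (b : ℝ≥0∞)⁻¹ < 1 := by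
    rw [← div_eq_mul_inv]
    exact ENNReal.div_lt_of_lt_mul (by rw [one_mul]; exact_mod_cast hAb)
  refine ne_top_of_le_ne_top (b := ∑' k, (#A : ℝ≥0∞) * ((#A : ℝ≥0∞) * (b : ℝ≥0∞)⁻¹) ^ k) ?_
    ((reciprocalSum_le_tsum_count_pow hb).trans (ENNReal.tsum_le_tsum fun k => ?_))
  · rw [ENNReal.tsum_mul_left]
    exact ENNReal.mul_ne_top (by simp) (tsum_geometric_lt_top.2 hr).ne
  · rw [mul_pow, ENNReal.inv_pow, ← mul_assoc, ← _root_.pow_succ']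
    gcongr
    exact_mod_cast Nat.sub_le_of_le_add
      (by simpa [add_comm] using count_digitsIn_pow_succ_le hb hA k)

theorem count_succ_digitsIn_le_count_succ_digitsIn_Icc (hb : 1 < b) (hA : A ⊆ range b)
    (hAb : #A < b) (x : ℕ) :
    count (fun k => DigitsIn b A (k + 1)) x ≤ count (fun k => DigitsIn b (Icc 1 #A) (k + 1)) x := by
  have := count_digitsIn_le_count_digitsIn_Icc hb hA hAb (x + 1)
  rwa [count_digitsIn_succ, count_digitsIn_succ, Nat.add_le_add_iff_right] at this

theorem reciprocalSum_digitsIn_le (hb : 1 < b) (hA : A ⊆ range b) (hAb : #A < b) :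
    reciprocalSum (DigitsIn b A) ≤ reciprocalSum (DigitsIn b (Icc 1 #A)) :=
  reciprocalSum_le_of_count_le (count_succ_digitsIn_le_count_succ_digitsIn_Icc hb hA hAb)

theorem reciprocalSum_digitsIn_lt (hb : 1 < b) (hA : A ⊆ range b) (hAb : #A < b)
    (hne : A ≠ Icc 1 #A) :
    reciprocalSum (DigitsIn b A) < reciprocalSum (DigitsIn b (Icc 1 #A)) := by
  have := count_digitsIn_lt_count_digitsIn_Icc hb hAb hne
  rw [count_digitsIn_succ, count_digitsIn_succ, Nat.add_lt_add_iff_right] at this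
  exact reciprocalSum_lt_of_count_lt (count_succ_digitsIn_le_count_succ_digitsIn_Icc hb hA hAb)
    this (reciprocalSum_digitsIn_ne_top hb (fun d hd => mem_range.2 (by simp at hd; omega))
      (by simpa))

theorem toReal_reciprocalSum_digitsIn_le_and_eq_iff (hb : 1 < b) (hA : A ⊆ range b)
    (hAb : #A < b) :
    (reciprocalSum (DigitsIn b A)).toReal ≤ (reciprocalSum (DigitsIn b (Icc 1 #A))).toReal ∧
      ((reciprocalSum (DigitsIn b A)).toReal = (reciprocalSum (DigitsIn b (Icc 1 #A))).toReal ↔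
        A = Icc 1 #A) := by
  have hfin := reciprocalSum_digitsIn_ne_top hb (A := Icc 1 #A)
    (fun d hd => mem_range.2 (by simp at hd; omega)) (by simpa using hAb)
  refine ⟨ENNReal.toReal_mono hfin (reciprocalSum_digitsIn_le hb hA hAb), fun h => ?_,
    fun h => by rw [← h]⟩
  by_contra hne
  exact (ENNReal.toReal_strict_mono hfin (reciprocalSum_digitsIn_lt hb hA hAb hne)).ne h

theorem kempnerSum_eq_toReal_reciprocalSum (hb : 1 < b) (E : Finset ℕ) :
    kempnerSum b E = (reciprocalSum (DigitsIn b (range b \ E))).toReal := by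
  rw [reciprocalSum, ENNReal.tsum_toReal_eq fun n => by
    split_ifs with h; exacts [by simp [h.1], by simp]]
  refine tsum_congr fun n => ?_
  have : (∀ d ∈ b.digits n, d ∉ E) ↔ DigitsIn b (range b \ E) n := by
    simp only [DigitsIn, Finset.mem_sdiff, Finset.mem_range]
    exact forall₂_congr fun d hd => ⟨fun h => ⟨Nat.digits_lt_base hb hd, h⟩, And.right⟩
  split_ifs <;> simp_all

end Kempner

theorem kempner_maximal_excluded_set_general (b : ℕ) (hb : 2 ≤ b) (E : Finset ℕ)
    (hEsub : ∀ d ∈ E, d < b) (p : ℕ) (hcard : E.card = p) (hp : 1 ≤ p) :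
    kempnerSum b E ≤ kempnerSum b (insert 0 (Finset.Ico (b - p + 1) b)) ∧
    (kempnerSum b E = kempnerSum b (insert 0 (Finset.Ico (b - p + 1) b)) ↔
      E = insert 0 (Finset.Ico (b - p + 1) b)) := by
  have hEb : E ⊆ Finset.range b := fun d hd => Finset.mem_range.2 (hEsub d hd)
  have hcard' : (Finset.range b \ E).card = b - p := by
    rw [Finset.card_sdiff_of_subset hEb, Finset.card_range, hcard]
  have hE' : insert 0 (Finset.Ico (b - p + 1) b) ⊆ Finset.range b :=
    Finset.insert_subset (Finset.mem_range.2 (by omega)) fun d hd => by simp at hd ⊢; omega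
  have hcompl : Finset.range b \ insert 0 (Finset.Ico (b - p + 1) b)
      = Finset.Icc 1 (Finset.range b \ E).card := by
    ext d
    simp only [hcard', Finset.mem_sdiff, Finset.mem_range, Finset.mem_insert, Finset.mem_Ico,
      Finset.mem_Icc]
    omega
  have hE : E = insert 0 (Finset.Ico (b - p + 1) b)
      ↔ Finset.range b \ E = Finset.range b \ insert 0 (Finset.Ico (b - p + 1) b) :=
    ⟨fun h => h ▸ rfl, fun h => by
      rw [← Finset.sdiff_sdiff_eq_self hEb, h, Finset.sdiff_sdiff_eq_self hE']⟩
  rw [Kempner.kempnerSum_eq_toReal_reciprocalSum hb, Kempner.kempnerSum_eq_toReal_reciprocalSum hb,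
    hE, hcompl]
  exact Kempner.toReal_reciprocalSum_digitsIn_le_and_eq_iff hb Finset.sdiff_subset (by omega)

theorem kempner_maximal_excluded_set (b : ℕ) (hb : 2 ≤ b) (E : Finset ℕ)
    (hEsub : ∀ d ∈ E, d < b) (p : ℕ) (hcard : E.card = p) (hp : 1 ≤ p) (hpb : p < b) :
    kempnerSum b E ≤ kempnerSum b (insert 0 (Finset.Ico (b - p + 1) b)) ∧
    (kempnerSum b E = kempnerSum b (insert 0 (Finset.Ico (b - p + 1) b)) ↔
      E = insert 0 (Finset.Ico (b - p + 1) b)) :=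
  kempner_maximal_excluded_set_general b hb E hEsub p hcard hp
end

section
/- As b → ∞ one has K(b,{0}) = b·log(b) + ζ(2)/(2b) − ζ(3)/(3b²) + O(b^{−3}); that is, there exist constants C > 0 and B such that for every integer b ≥ B, |K(b,{0}) − b·log(b) − ζ(2)/(2b) + ζ(3)/(3b²)| ≤ C/b³. -/
open MeasureTheory Real ENNReal

/-!
Let `A` be the set of positive integers with no digit `0` in base `b`. Every `n ∈ A` is uniquely
`b m + d` with `m ∈ A ∪ {0}` and `1 ≤ d < b`, and for `m ≠ 0`
`∑_{d=1}^{b-1} log (1 + 1/(b m + d)) = log (1 + 1/m) - log (1 + 1/(b m))`, while for `m = 0`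
the sum is `log b`. Summing over `A` therefore telescopes to `∑_{n ∈ A} log (1 + 1/(b n)) = log b`; the same
identity bounds the partial sums of `∑_{n ∈ A} 1/n`, so `K(b,{0})` converges.
Expanding `log (1 + y) = y - y²/2 + y³/3 + O(y⁴)` at `y = 1/(b n)` gives
`b log b = K - J₂/(2b) + J₃/(3b²) + O(b⁻³)` with `J_s = ∑_{n ∈ A} n⁻ˢ`.
Finally `ζ(s) - J_s` runs over numbers with a zero digit, and those below `b²` are multiples of
`b`, so `ζ(s) - J_s = O(b⁻²)` for `s ≥ 2`.
-/

open Finset Filter Topology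

namespace Kempner

def zeroFree (b : ℕ) : Set ℕ := {n | n ≠ 0 ∧ 0 ∉ Nat.digits b n}

instance (b : ℕ) : DecidablePred (· ∈ zeroFree b) :=
  fun n => inferInstanceAs (Decidable (n ≠ 0 ∧ 0 ∉ Nat.digits b n))

variable {b : ℕ}

theorem mul_add_mem_zeroFree_iff (hb : 1 < b) {m d : ℕ} (hd : d < b) :
    b * m + d ∈ zeroFree b ↔ (m = 0 ∨ m ∈ zeroFree b) ∧ d ≠ 0 := by
  by_cases h : d = 0 ∧ m = 0
  · simp [zeroFree, h]
  · have hne : b * m + d ≠ 0 := by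
      simp only [ne_eq, Nat.add_eq_zero_iff, mul_eq_zero]
      omega
    simp only [zeroFree, Set.mem_ofPred_eq]
    rw [add_comm, Nat.digits_add b hb d m hd (by tauto), List.mem_cons, add_comm]
    rcases eq_or_ne m 0 with rfl | hm <;> grind [Nat.digits_zero]

theorem mem_zeroFree_of_lt (hb : 1 < b) {n : ℕ} (h0 : n ≠ 0) (hn : n < b) :
    n ∈ zeroFree b := by
  simpa [h0] using (mul_add_mem_zeroFree_iff hb (m := 0) hn).2

theorem dvd_of_notMem_zeroFree (hb : 1 < b) {n : ℕ} (hn : n ∉ zeroFree b) (hlt : n < b ^ 2) :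
    b ∣ n := by
  have hq : n / b < b := Nat.div_lt_of_lt_mul (by rwa [← sq])
  rw [← Nat.div_add_mod n b, mul_add_mem_zeroFree_iff hb (Nat.mod_lt n (by omega))] at hn
  have : n / b = 0 ∨ n / b ∈ zeroFree b :=
    or_iff_not_imp_left.2 fun hq0 => mem_zeroFree_of_lt hb hq0 hq
  exact Nat.dvd_of_mod_eq_zero (by tauto)

def zeroFreeBelow (b L : ℕ) : Finset ℕ := {n ∈ range (b ^ L) | n ∈ zeroFree b}

theorem sum_zeroFreeBelow_succ {M : Type*} [AddCommMonoid M] (hb : 1 < b) (L : ℕ)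
    (f : ℕ → M) :
    ∑ n ∈ zeroFreeBelow b (L + 1), f n =
      ∑ m ∈ insert 0 (zeroFreeBelow b L), ∑ d ∈ Ico 1 b, f (b * m + d) := by
  rw [← sum_product']
  symm
  refine sum_nbij' (fun p => b * p.1 + p.2) (fun n => (n / b, n % b)) ?_ ?_ ?_
    (fun n _ => Nat.div_add_mod n b) (fun _ _ => rfl)
  · rintro ⟨m, d⟩ h
    simp only [mem_product, mem_insert, zeroFreeBelow, mem_filter, mem_range, mem_Ico] at h ⊢
    obtain ⟨hm, hd1, hd⟩ := h
    have hmL : m < b ^ L := by rcases hm with rfl | hm; exacts [by positivity, hm.1]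
    refine ⟨by rw [pow_succ']; nlinarith, (mul_add_mem_zeroFree_iff hb hd).2 ⟨?_, by omega⟩⟩
    exact hm.imp_right And.right
  · intro n h
    simp only [mem_product, mem_insert, zeroFreeBelow, mem_filter, mem_range, mem_Ico] at h ⊢
    obtain ⟨hn, hA⟩ := h
    rw [← Nat.div_add_mod n b, mul_add_mem_zeroFree_iff hb (Nat.mod_lt n (by omega))] at hA
    have hq : n / b < b ^ L := Nat.div_lt_of_lt_mul (by rwa [← pow_succ'])
    exact ⟨hA.1.imp_right (⟨hq, ·⟩), by omega, Nat.mod_lt n (by omega)⟩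
  · rintro ⟨m, d⟩ h
    simp only [mem_product, mem_Ico] at h
    simp [Nat.mul_add_div (by omega : 0 < b), Nat.div_eq_of_lt h.2.2, Nat.mod_eq_of_lt h.2.2]

theorem zeroFreeBelow_mono (hb : 1 ≤ b) : Monotone (zeroFreeBelow b) := fun _ _ h =>
  filter_subset_filter _ (range_subset_range.2 (Nat.pow_le_pow_right hb h))

theorem sum_zeroFreeBelow_eq_sum_range {M : Type*} [AddCommMonoid M] (L : ℕ) (f : ℕ → M) :
    ∑ n ∈ zeroFreeBelow b L, f n = ∑ n ∈ range (b ^ L), (zeroFree b).indicator f n := by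
  simp_rw [zeroFreeBelow, sum_filter, Set.indicator_apply]

theorem tendsto_sum_zeroFreeBelow {M : Type*} [AddCommMonoid M] [TopologicalSpace M]
    (hb : 1 < b) {f : ℕ → M} {a : M} (hf : HasSum ((zeroFree b).indicator f) a) :
    Tendsto (fun L => ∑ n ∈ zeroFreeBelow b L, f n) atTop (𝓝 a) := by
  simp only [sum_zeroFreeBelow_eq_sum_range]
  exact hf.tendsto_sum_nat.comp (tendsto_pow_atTop_atTop_of_one_lt hb)

theorem log_one_add_inv {y : ℝ} (hy : 0 < y) :
    Real.log (1 + y⁻¹) = Real.log (y + 1) - Real.log y := by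
  rw [← log_div (by positivity) hy.ne', add_div, div_self hy.ne', one_div, add_comm]

theorem log_one_add_le_self {x : ℝ} (hx : -1 < x) : Real.log (1 + x) ≤ x := by
  linarith [Real.log_le_sub_one_of_pos (by linarith : 0 < 1 + x)]

theorem le_two_mul_log_one_add {x : ℝ} (hx0 : 0 ≤ x) (hx : x ≤ 2) :
    x ≤ 2 * Real.log (1 + x) := by
  have h := Real.le_log_one_add_of_nonneg hx0
  rw [div_le_iff₀ (by linarith)] at h
  nlinarith

theorem sum_Ico_log_one_add_inv {x : ℝ} (hx : 0 ≤ x) {k : ℕ} (hk : 1 ≤ k) :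
    ∑ d ∈ Ico 1 k, Real.log (1 + (x + d)⁻¹) = Real.log (x + k) - Real.log (x + 1) := by
  induction k, hk using Nat.le_induction with
  | base => simp
  | succ k hk ih =>
    rw [sum_Ico_succ_top hk, ih, log_one_add_inv (by positivity)]
    push_cast
    rw [← add_assoc]
    ring

theorem sum_Ico_log_one_add_inv_mul_add (hb : 1 ≤ b) {m : ℕ} (hm : m ≠ 0) :
    ∑ d ∈ Ico 1 b, Real.log (1 + ((b * m + d : ℕ) : ℝ)⁻¹) =
      Real.log (1 + (m : ℝ)⁻¹) - Real.log (1 + ((b * m : ℕ) : ℝ)⁻¹) := by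
  have hb0 : (0 : ℝ) < b := by exact_mod_cast hb
  have hm0 : (0 : ℝ) < m := by exact_mod_cast Nat.pos_of_ne_zero hm
  push_cast
  rw [sum_Ico_log_one_add_inv (by positivity) hb, log_one_add_inv hm0,
    log_one_add_inv (by positivity), ← mul_add_one, log_mul hb0.ne' (by positivity),
    log_mul hb0.ne' hm0.ne']
  ring

theorem sum_zeroFreeBelow_log_one_add_inv_mul (hb : 1 < b) (L : ℕ) :
    ∑ n ∈ zeroFreeBelow b L, Real.log (1 + ((b * n : ℕ) : ℝ)⁻¹) =
      Real.log b + ∑ n ∈ zeroFreeBelow b L, Real.log (1 + (n : ℝ)⁻¹)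
        - ∑ n ∈ zeroFreeBelow b (L + 1), Real.log (1 + (n : ℝ)⁻¹) := by
  have h0 : 0 ∉ zeroFreeBelow b L := by
    simp only [zeroFreeBelow, mem_filter]
    exact fun h => h.2.1 rfl
  have hdigits := sum_Ico_log_one_add_inv (le_refl (0 : ℝ)) hb.le
  simp only [zero_add, Real.log_one, sub_zero] at hdigits
  rw [sum_zeroFreeBelow_succ hb, sum_insert h0, sum_congr rfl fun m hm =>
    sum_Ico_log_one_add_inv_mul_add hb.le (mem_filter.1 hm).2.1]
  simp only [mul_zero, zero_add, hdigits, sum_sub_distrib]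
  ring

theorem sum_zeroFreeBelow_log_one_add_inv_mul_le (hb : 1 < b) (L : ℕ) :
    ∑ n ∈ zeroFreeBelow b L, Real.log (1 + ((b * n : ℕ) : ℝ)⁻¹) ≤ Real.log b := by
  have := sum_le_sum_of_subset_of_nonneg (f := fun n : ℕ => Real.log (1 + (n : ℝ)⁻¹))
    (zeroFreeBelow_mono hb.le L.le_succ) fun n _ _ => Real.log_nonneg (by simp)
  rw [sum_zeroFreeBelow_log_one_add_inv_mul hb]
  linarith

theorem summable_zeroFree_inv (hb : 1 < b) :
    Summable ((zeroFree b).indicator fun n : ℕ => (n : ℝ)⁻¹) := by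
  have hb0 : (0 : ℝ) < b := by positivity
  refine summable_of_sum_range_le (c := 2 * b * Real.log b)
    (Set.indicator_nonneg fun n _ => by positivity) fun N => ?_
  calc ∑ n ∈ range N, (zeroFree b).indicator (fun n : ℕ => (n : ℝ)⁻¹) n
      ≤ ∑ n ∈ zeroFreeBelow b N, (n : ℝ)⁻¹ := by
        rw [sum_zeroFreeBelow_eq_sum_range]
        exact sum_le_sum_of_subset_of_nonneg (range_subset_range.2 (Nat.lt_pow_self hb).le)
          fun n _ _ => Set.indicator_nonneg (fun n _ => by positivity) n
    _ ≤ ∑ n ∈ zeroFreeBelow b N, 2 * b * Real.log (1 + ((b * n : ℕ) : ℝ)⁻¹) := by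
        refine sum_le_sum fun n hn => ?_
        have hn : (1 : ℝ) ≤ n := by
          exact_mod_cast Nat.one_le_iff_ne_zero.2 (mem_filter.1 hn).2.1
        have hbn : ((b * n : ℕ) : ℝ)⁻¹ ≤ 2 := by
          push_cast
          exact (inv_le_one_of_one_le₀ (one_le_mul_of_one_le_of_one_le
            (by exact_mod_cast hb.le) hn)).trans one_le_two
        calc (n : ℝ)⁻¹ = b * ((b * n : ℕ) : ℝ)⁻¹ := by push_cast; field_simp
          _ ≤ b * (2 * Real.log (1 + ((b * n : ℕ) : ℝ)⁻¹)) :=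
            mul_le_mul_of_nonneg_left (le_two_mul_log_one_add (by positivity) hbn) hb0.le
          _ = _ := by ring
    _ ≤ 2 * b * Real.log b := by
        rw [← mul_sum]
        exact mul_le_mul_of_nonneg_left (sum_zeroFreeBelow_log_one_add_inv_mul_le hb N)
          (by positivity)

theorem summable_zeroFree_of_le (hb : 1 < b) {f : ℕ → ℝ} {c : ℝ}
    (hf0 : ∀ n ∈ zeroFree b, 0 ≤ f n) (hf : ∀ n ∈ zeroFree b, f n ≤ c * (n : ℝ)⁻¹) :
    Summable ((zeroFree b).indicator f) := by
  refine ((summable_zeroFree_inv hb).mul_left c).of_nonneg_of_le (Set.indicator_nonneg hf0)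
    fun n => ?_
  by_cases hn : n ∈ zeroFree b <;> simp [hn, hf]

theorem hasSum_zeroFree_log_one_add_inv_mul (hb : 1 < b) :
    HasSum ((zeroFree b).indicator fun n : ℕ => Real.log (1 + ((b * n : ℕ) : ℝ)⁻¹))
      (Real.log b) := by
  have hlog (n : ℕ) : 0 ≤ Real.log (1 + (n : ℝ)⁻¹) ∧ Real.log (1 + (n : ℝ)⁻¹) ≤ (n : ℝ)⁻¹ :=
    ⟨Real.log_nonneg (by simp),
      log_one_add_le_self (by linarith [inv_nonneg.2 (n.cast_nonneg : (0 : ℝ) ≤ n)])⟩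
  have hF := summable_zeroFree_of_le hb (c := 1) (fun n _ => (hlog _).1) fun n _ => by
    refine (hlog _).2.trans ?_
    rw [Nat.cast_mul, mul_inv]
    exact mul_le_mul_of_nonneg_right (inv_le_one_of_one_le₀ (by exact_mod_cast hb.le))
      (by positivity)
  have hG := summable_zeroFree_of_le hb (c := 1) (fun n _ => (hlog n).1) fun n _ => by
    simpa using (hlog n).2
  have hT := tendsto_sum_zeroFreeBelow hb hG.hasSum
  convert hF.hasSum
  refine tendsto_nhds_unique ?_ (tendsto_sum_zeroFreeBelow hb hF.hasSum)
  simp_rw [sum_zeroFreeBelow_log_one_add_inv_mul hb]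
  simpa using (tendsto_const_nhds.add hT).sub (hT.comp (tendsto_add_atTop_nat 1))

theorem abs_log_one_add_sub_le {y : ℝ} (hy : |y| ≤ 1 / 2) :
    |Real.log (1 + y) - (y - y ^ 2 / 2 + y ^ 3 / 3)| ≤ 2 * y ^ 4 := by
  have h := Real.abs_log_sub_add_sum_range_le (x := -y) (by rw [abs_neg]; linarith) 3
  have e : Real.log (1 + y) - (y - y ^ 2 / 2 + y ^ 3 / 3) =
      (∑ i ∈ range 3, (-y) ^ (i + 1) / (i + 1)) + Real.log (1 - -y) := by
    simp only [sum_range_succ, sum_range_zero, sub_neg_eq_add]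
    ring
  have hy4 : |y| ^ (3 + 1) = y ^ 4 := Even.pow_abs ⟨2, rfl⟩ y
  rw [e]
  refine h.trans ?_
  rw [abs_neg, hy4, div_le_iff₀ (by linarith)]
  nlinarith [mul_le_mul_of_nonneg_left hy (by positivity : (0 : ℝ) ≤ y ^ 4)]

theorem inv_natCast_pow_le_inv_natCast_pow (n : ℕ) {s t : ℕ} (hs : s ≠ 0) (hst : s ≤ t) :
    ((n : ℝ) ^ t)⁻¹ ≤ ((n : ℝ) ^ s)⁻¹ := by
  rcases Nat.eq_zero_or_pos n with rfl | hn
  · simp [zero_pow hs, zero_pow (hs.bot_lt.trans_le hst).ne']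
  · exact inv_pow_le_inv_pow_of_le (by exact_mod_cast hn) hst

theorem tsum_inv_sq_le_two : ∑' n : ℕ, ((n : ℝ) ^ 2)⁻¹ ≤ 2 := by
  have h := hasSum_zeta_two.tsum_eq
  simp only [one_div] at h
  rw [h]
  nlinarith [Real.pi_lt_d2, Real.pi_pos]

theorem tsum_indicator_Ioi_inv_sq_le (k : ℕ) :
    ∑' n, (Set.Ioi k).indicator (fun n : ℕ => ((n : ℝ) ^ 2)⁻¹) n ≤ 2 / (k + 1) := by
  refine Real.tsum_le_of_sum_range_le (Set.indicator_nonneg fun _ _ => by positivity)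
    fun N => (le_of_eq ?_).trans (sum_Ioo_inv_sq_le k N)
  simp_rw [Set.indicator_apply, Set.mem_Ioi]
  rw [← sum_filter]
  congr 1
  ext n
  simp only [mem_filter, mem_range, mem_Ioo]
  omega

noncomputable def zeroFreePowSum (b s : ℕ) : ℝ :=
  ∑' n, (zeroFree b).indicator (fun n : ℕ => ((n : ℝ) ^ s)⁻¹) n

theorem kempnerSum_zero_eq (b : ℕ) : kempnerSum b {0} = zeroFreePowSum b 1 :=
  tsum_congr fun n => by simp [zeroFree, Set.indicator_apply, List.forall_mem_ne']

theorem summable_zeroFree_inv_pow (hb : 1 < b) {s : ℕ} (hs : s ≠ 0) :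
    Summable ((zeroFree b).indicator fun n : ℕ => ((n : ℝ) ^ s)⁻¹) :=
  summable_zeroFree_of_le hb (c := 1) (fun n _ => by positivity) fun n _ => by
    simpa using inv_natCast_pow_le_inv_natCast_pow n one_ne_zero (Nat.one_le_iff_ne_zero.2 hs)

theorem zeroFreePowSum_le_two {s : ℕ} (hs : 2 ≤ s) : zeroFreePowSum b s ≤ 2 := by
  have hsum := Real.summable_nat_pow_inv.2 hs
  calc zeroFreePowSum b s ≤ ∑' n : ℕ, ((n : ℝ) ^ s)⁻¹ :=
        (hsum.indicator _).tsum_le_tsum (Set.indicator_le_self' fun n _ => by positivity) hsum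
    _ ≤ ∑' n : ℕ, ((n : ℝ) ^ 2)⁻¹ :=
        hsum.tsum_le_tsum (fun n => inv_natCast_pow_le_inv_natCast_pow n two_ne_zero hs)
          (Real.summable_nat_pow_inv.2 one_lt_two)
    _ ≤ 2 := tsum_inv_sq_le_two

theorem abs_log_sub_zeroFreePowSum_le (hb : 2 ≤ b) :
    |Real.log b - (zeroFreePowSum b 1 / b - zeroFreePowSum b 2 / (2 * b ^ 2)
      + zeroFreePowSum b 3 / (3 * b ^ 3))| ≤ 2 * zeroFreePowSum b 4 / b ^ 4 := by
  set f : ℕ → ℕ → ℝ := fun s => (zeroFree b).indicator fun n : ℕ => ((n : ℝ) ^ s)⁻¹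
  have hJ {s : ℕ} (hs : s ≠ 0) : HasSum (f s) (zeroFreePowSum b s) :=
    (summable_zeroFree_inv_pow hb hs).hasSum
  have hT := (hasSum_zeroFree_log_one_add_inv_mul hb).sub
    ((((hJ one_ne_zero).div_const (b : ℝ)).sub ((hJ two_ne_zero).div_const (2 * b ^ 2))).add
      ((hJ three_ne_zero).div_const (3 * b ^ 3)))
  refine hT.norm_le_of_bounded (((hJ four_ne_zero).mul_left 2).div_const _) fun n => ?_
  by_cases hn : n ∈ zeroFree b
  · simp only [f, Set.indicator_of_mem hn, Real.norm_eq_abs]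
    have hn1 : (1 : ℝ) ≤ n := by exact_mod_cast Nat.one_le_iff_ne_zero.2 hn.1
    have hbR : (2 : ℝ) ≤ b := by exact_mod_cast hb
    have hy : |((b * n : ℕ) : ℝ)⁻¹| ≤ 1 / 2 := by
      rw [abs_inv, Nat.abs_cast, Nat.cast_mul]
      exact inv_le_of_inv_le₀ (by norm_num) (by nlinarith)
    convert abs_log_one_add_sub_le hy using 2 <;> push_cast <;> field_simp
  · simp [f, hn]

theorem abs_zeroFreePowSum_one_sub_mul_log_le (hb : 2 ≤ b) :
    |zeroFreePowSum b 1 - b * Real.log b - zeroFreePowSum b 2 / (2 * b)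
      + zeroFreePowSum b 3 / (3 * b ^ 2)| ≤ 4 / (b : ℝ) ^ 3 := by
  have hbR : (0 : ℝ) < b := by positivity
  have h : _ ≤ 4 / (b : ℝ) ^ 4 := (abs_log_sub_zeroFreePowSum_le hb).trans <|
    div_le_div_of_nonneg_right
      (by linarith [zeroFreePowSum_le_two (b := b) (s := 4) (by norm_num)]) (by positivity)
  have e : zeroFreePowSum b 1 - b * Real.log b - zeroFreePowSum b 2 / (2 * b)
      + zeroFreePowSum b 3 / (3 * b ^ 2) = -(b * (Real.log b - (zeroFreePowSum b 1 / b
        - zeroFreePowSum b 2 / (2 * b ^ 2) + zeroFreePowSum b 3 / (3 * b ^ 3)))) := by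
    field_simp
    ring
  rw [e, abs_neg, abs_mul, abs_of_pos hbR]
  calc (b : ℝ) * _ ≤ b * (4 / b ^ 4) := mul_le_mul_of_nonneg_left h hbR.le
    _ = 4 / b ^ 3 := by field_simp

/-- The complement contains `0`, whose term `(0 ^ s)⁻¹` is `0`. -/
noncomputable def zeroFreeComplPowSum (b s : ℕ) : ℝ :=
  ∑' n, (zeroFree b)ᶜ.indicator (fun n : ℕ => ((n : ℝ) ^ s)⁻¹) n

theorem zetaVal_eq_zeroFreePowSum_add {s : ℕ} (hs : 2 ≤ s) :
    zetaVal s = zeroFreePowSum b s + zeroFreeComplPowSum b s := by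
  have hsum := Real.summable_nat_pow_inv.2 hs
  rw [zeroFreePowSum, zeroFreeComplPowSum, ← (hsum.indicator _).tsum_add (hsum.indicator _)]
  simp_rw [Set.indicator_self_add_compl_apply]
  rw [hsum.tsum_eq_zero_add, zetaVal]
  simp [zero_pow (by omega : s ≠ 0)]

theorem zeroFreeComplPowSum_nonneg (s : ℕ) : 0 ≤ zeroFreeComplPowSum b s :=
  tsum_nonneg (Set.indicator_nonneg fun _ _ => by positivity)

theorem zeroFreeComplPowSum_le_of_le {s t : ℕ} (hs : 2 ≤ s) (hst : s ≤ t) :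
    zeroFreeComplPowSum b t ≤ zeroFreeComplPowSum b s :=
  ((Real.summable_nat_pow_inv.2 (hs.trans hst)).indicator _).tsum_le_tsum
    (fun _ => Set.indicator_le_indicator (inv_natCast_pow_le_inv_natCast_pow _ (by omega) hst))
    ((Real.summable_nat_pow_inv.2 hs).indicator _)

theorem zeroFreeComplPowSum_two_le (hb : 1 < b) : zeroFreeComplPowSum b 2 ≤ 4 / b ^ 2 := by
  set f : ℕ → ℝ := fun n => ((n : ℝ) ^ 2)⁻¹
  have hf : Summable f := Real.summable_nat_pow_inv.2 one_lt_two
  have hf0 (s : Set ℕ) (n : ℕ) : 0 ≤ s.indicator f n :=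
    Set.indicator_nonneg (fun _ _ => by positivity) n
  have hsplit (n : ℕ) : (zeroFree b)ᶜ.indicator f n ≤
      (Set.range (b * ·)).indicator f n + (Set.Ioi (b ^ 2)).indicator f n := by
    have := hf0 (Set.range (b * ·)) n
    have := hf0 (Set.Ioi (b ^ 2)) n
    by_cases hn : n ∈ zeroFree b
    · rw [Set.indicator_of_notMem (Set.notMem_compl_iff.2 hn)]
      positivity
    by_cases hlt : b ^ 2 < n
    · rw [Set.indicator_of_mem hn, Set.indicator_of_mem (Set.mem_Ioi.2 hlt)]
      linarith
    · have hdvd : b ∣ n := by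
        rcases (not_lt.1 hlt).lt_or_eq with hlt | rfl
        exacts [dvd_of_notMem_zeroFree hb hn hlt, dvd_pow_self b two_ne_zero]
      rw [Set.indicator_of_mem hn,
        Set.indicator_of_mem (Set.mem_range.2 (hdvd.imp fun _ => Eq.symm))]
      linarith
  have hmul : ∑' n, (Set.range (b * ·)).indicator f n ≤ 2 / b ^ 2 := by
    rw [← _root_.tsum_subtype, tsum_range f (mul_right_injective₀ (by omega : b ≠ 0))]
    simp only [f, Nat.cast_mul, mul_pow, mul_inv]
    rw [tsum_mul_left, div_eq_inv_mul]
    exact mul_le_mul_of_nonneg_left tsum_inv_sq_le_two (by positivity)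
  have htail : ∑' n, (Set.Ioi (b ^ 2)).indicator f n ≤ 2 / b ^ 2 :=
    (tsum_indicator_Ioi_inv_sq_le _).trans (by push_cast; gcongr; linarith)
  calc zeroFreeComplPowSum b 2
      ≤ ∑' n, ((Set.range (b * ·)).indicator f n + (Set.Ioi (b ^ 2)).indicator f n) :=
        (hf.indicator _).tsum_le_tsum hsplit ((hf.indicator _).add (hf.indicator _))
    _ = ∑' n, (Set.range (b * ·)).indicator f n + ∑' n, (Set.Ioi (b ^ 2)).indicator f n :=
        (hf.indicator _).tsum_add (hf.indicator _)
    _ ≤ 2 / b ^ 2 + 2 / b ^ 2 := add_le_add hmul htail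
    _ = 4 / b ^ 2 := by ring

theorem abs_zeroFreeComplPowSum_sub_le (hb : 2 ≤ b) :
    |zeroFreeComplPowSum b 3 / (3 * b ^ 2) - zeroFreeComplPowSum b 2 / (2 * b)|
      ≤ 2 / (b : ℝ) ^ 3 := by
  have hbR : (2 : ℝ) ≤ b := by exact_mod_cast hb
  have hD₂ := zeroFreeComplPowSum_nonneg (b := b) 2
  have h₂ : zeroFreeComplPowSum b 2 / (2 * b) ≤ 2 / (b : ℝ) ^ 3 :=
    calc _ ≤ 4 / (b : ℝ) ^ 2 / (2 * b) := by gcongr; exact zeroFreeComplPowSum_two_le hb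
      _ = 2 / (b : ℝ) ^ 3 := by field_simp; ring
  have h₃ : zeroFreeComplPowSum b 3 / (3 * b ^ 2) ≤ 2 / (b : ℝ) ^ 3 :=
    (div_le_div₀ hD₂ (zeroFreeComplPowSum_le_of_le le_rfl (by norm_num)) (by positivity)
      (by nlinarith)).trans h₂
  exact abs_sub_le_of_nonneg_of_le
    (div_nonneg (zeroFreeComplPowSum_nonneg 3) (by positivity)) h₃ (by positivity) h₂

end Kempner

open Kempner

theorem kempner_zero_digit_asymptotic :
    ∃ C > (0 : ℝ), ∃ B : ℕ, ∀ b : ℕ, B ≤ b →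
      |kempnerSum b {0} - (b : ℝ) * Real.log b - zetaVal 2 / (2 * b)
        + zetaVal 3 / (3 * (b : ℝ) ^ 2)| ≤ C / (b : ℝ) ^ 3 := by
  refine ⟨6, by norm_num, 2, fun b hb => ?_⟩
  rw [kempnerSum_zero_eq, zetaVal_eq_zeroFreePowSum_add (b := b) le_rfl,
    zetaVal_eq_zeroFreePowSum_add (b := b) (by norm_num)]
  calc _ = |(zeroFreePowSum b 1 - b * Real.log b - zeroFreePowSum b 2 / (2 * b)
          + zeroFreePowSum b 3 / (3 * b ^ 2))
          + (zeroFreeComplPowSum b 3 / (3 * b ^ 2) - zeroFreeComplPowSum b 2 / (2 * b))| := by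
        congr 1
        ring
    _ ≤ 4 / (b : ℝ) ^ 3 + 2 / (b : ℝ) ^ 3 := (abs_add_le _ _).trans
        (add_le_add (abs_zeroFreePowSum_one_sub_mul_log_le hb) (abs_zeroFreeComplPowSum_sub_le hb))
    _ = 6 / (b : ℝ) ^ 3 := by ring
end

section
/- Let b ≥ 2 be an integer, E a nonempty set of base-b digits, A = {0,…,b−1} \ E, and N = #A. Then for every real number d and every integer m ≥ 1, (b^{m+1} − N)·v_m(d) = b^{m+1}·d^m + Σ_{j=1}^{m} C(m,j)·(Σ_{a∈A} (bd − a − d)^j)·v_{m−j}(d), where C(m,j) is the binomial coefficient; in particular v_0(d) = b/#E. -/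
/-!
Read the admissible digit strings most significant digit first. Prepending a digit `a` to a
string maps its point `x` to `(a + x) / b` and divides its weight by `b`, so
`μ = δ₀ + b⁻¹ ∑_{a ∈ A} (x ↦ (a + x) / b)_* μ`. Strings of length `n` carry total weight
`(N / b)ⁿ`, hence `μ` is a finite measure of mass `b / (b - N) = b / #E` carried by `[0, 1)`,
which gives `v_0`, and the self-similarity holds for every continuous integrand. For
`(d - x)^m` write `d - (a + x) / b = ((b d - a - d) + (d - x)) / b` and expand binomially:
`b^{m+1} v_m = b^{m+1} d^m + ∑_j C(m,j) (∑_a (b d - a - d)^j) v_{m-j}`, whose `j = 0` term is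
`N v_m`.
-/

open MeasureTheory Real ENNReal

open Finset

namespace MeasureTheory.Measure

theorem sum_option {X ι : Type*} [MeasurableSpace X] (μ : Option ι → Measure X) :
    Measure.sum μ = μ none + Measure.sum fun i => μ (some i) := by
  ext s hs
  rw [add_apply, sum_apply _ hs, sum_apply _ hs, ENNReal.tsum_eq_add_tsum_ite none,
    ← Option.some_injective ι |>.tsum_eq]
  · congr 1
    simp
  · intro o ho
    cases o with
    | none => simp at ho
    | some i => exact ⟨i, rfl⟩

end MeasureTheory.Measure

def Equiv.listEquivOption (α : Type*) : List α ≃ Option (α × List α) where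
  toFun
    | [] => none
    | a :: l => some (a, l)
  invFun o := o.elim [] fun p => p.1 :: p.2
  left_inv := by rintro (_ | ⟨a, l⟩) <;> rfl
  right_inv := by rintro (_ | ⟨a, l⟩) <;> rfl

noncomputable def Equiv.listSubtype (A : Finset ℕ) :
    List A ≃ {l : List ℕ // ∀ d ∈ l, d ∈ A} :=
  (Equiv.ofInjective _ (List.map_injective_iff.2 Subtype.val_injective)).trans
    (Equiv.setCongr (Set.range_list_map_coe (A : Set ℕ)))

namespace Kempner

-- `[d₁, …, dₗ] ↦ 0.d₁…dₗ` in base `b`: most significant digit first.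
noncomputable def radixValue (b : ℕ) (l : List ℕ) : ℝ :=
  l.foldr (fun a x => ((a : ℝ) + x) / b) 0

@[simp] lemma radixValue_nil (b : ℕ) : radixValue b [] = 0 := rfl

@[simp] lemma radixValue_cons (b a : ℕ) (l : List ℕ) :
    radixValue b (a :: l) = (a + radixValue b l) / b := rfl

lemma radixValue_eq_ofDigits_reverse {b : ℕ} (hb : b ≠ 0) (l : List ℕ) :
    radixValue b l = ((Nat.ofDigits b l.reverse : ℕ) : ℝ) / (b : ℝ) ^ l.length := by
  induction l with
  | nil => simp
  | cons a l ih =>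
    rw [radixValue_cons, ih, Nat.ofDigits_reverse_cons, List.length_cons]
    push_cast
    field_simp
    ring

lemma radixValue_mem_Ico {b : ℕ} {l : List ℕ} (hl : ∀ a ∈ l, a < b) :
    radixValue b l ∈ Set.Ico 0 1 := by
  induction l with
  | nil => simp
  | cons a l ih =>
    have ha : (a : ℝ) + 1 ≤ b := by exact_mod_cast hl a List.mem_cons_self
    obtain ⟨h0, h1⟩ := ih fun c hc => hl c (List.mem_cons_of_mem a hc)
    have hb : (0 : ℝ) < b := by linarith [(a.cast_nonneg : (0 : ℝ) ≤ a)]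
    rw [radixValue_cons]
    exact ⟨by positivity, by rw [div_lt_one hb]; linarith⟩

noncomputable def digitMeasure (b : ℕ) (A : Finset ℕ) : Measure ℝ :=
  Measure.sum fun L : List A =>
    ((b : ℝ≥0∞) ^ L.length)⁻¹ • Measure.dirac (radixValue b (L.map (↑)))

-- `Nat.ofDigits` reads its list least significant digit first, hence the reversal.
lemma kempnerMeasure_eq_digitMeasure {b : ℕ} (hb : b ≠ 0) (E : Finset ℕ) :
    kempnerMeasure b E = digitMeasure b (range b \ E) := by
  let e := (Equiv.listSubtype (range b \ E)).trans
    (Equiv.subtypeEquiv (p := fun l : List ℕ => ∀ d ∈ l, d ∈ range b \ E)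
      (q := fun l : List ℕ => ∀ d ∈ l, d < b ∧ d ∉ E)
      (List.reverse_involutive.toPerm _) (fun l => by simp))
  rw [kempnerMeasure, ← Measure.sum_comp_equiv e]
  congr 1
  funext L
  simp [e, Equiv.listSubtype, Equiv.setCongr, Equiv.subtypeEquivProp,
    radixValue_eq_ofDigits_reverse hb]

variable {b : ℕ} {A : Finset ℕ}

lemma digitMeasure_eq_dirac_add_sum_map :
    digitMeasure b A = Measure.dirac 0 +
      (b : ℝ≥0∞)⁻¹ • ∑ a ∈ A, (digitMeasure b A).map (fun x : ℝ => ((a : ℝ) + x) / b) := by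
  have hg (a : ℕ) : Measurable fun x : ℝ => ((a : ℝ) + x) / b := by fun_prop
  conv_lhs => rw [digitMeasure, ← Measure.sum_comp_equiv (Equiv.listEquivOption A).symm,
    Measure.sum_option]
  simp_rw [digitMeasure, Measure.map_sum (hg _).aemeasurable, Measure.map_smul,
    Measure.map_dirac' (hg _)]
  ext s hs
  simp only [Measure.add_apply, Measure.smul_apply, Measure.coe_finsetSum, Finset.sum_apply,
    Measure.sum_apply _ hs, Function.comp_apply, Equiv.listEquivOption, Equiv.coe_fn_symm_mk,
    Option.elim, List.length_nil, pow_zero, inv_one, one_smul, List.map_nil, radixValue_nil,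
    List.length_cons, List.map_cons, radixValue_cons, smul_eq_mul]
  rw [ENNReal.tsum_prod', tsum_fintype, ← sum_coe_sort A, mul_sum]
  congr 1
  refine sum_congr rfl fun a _ => ?_
  rw [← ENNReal.tsum_mul_left]
  congr 1
  funext L
  rw [pow_succ, ENNReal.mul_inv (Or.inr (by simp)) (Or.inl (by simp))]
  ring

lemma digitMeasure_univ :
    digitMeasure b A Set.univ = ∑' n : ℕ, ((#A : ℝ≥0∞) / b) ^ n := by
  rw [digitMeasure, Measure.sum_apply _ MeasurableSet.univ]
  simp only [Measure.smul_apply, measure_univ, smul_eq_mul, mul_one]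
  rw [← List.equivSigmaTuple.symm.tsum_eq, ENNReal.tsum_sigma']
  congr 1
  funext n
  simp [List.equivSigmaTuple, div_eq_mul_inv, mul_pow, ENNReal.inv_pow]

lemma card_div_lt_one (hAb : #A < b) : (#A : ℝ≥0∞) / b < 1 := by
  rw [ENNReal.div_lt_iff (by simp; omega) (by simp), one_mul]
  exact_mod_cast hAb

lemma isFiniteMeasure_digitMeasure (hAb : #A < b) : IsFiniteMeasure (digitMeasure b A) := by
  refine ⟨?_⟩
  rw [digitMeasure_univ, ENNReal.tsum_geometric, ENNReal.inv_lt_top, tsub_pos_iff_lt]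
  exact card_div_lt_one hAb

lemma digitMeasure_real_univ (hAb : #A < b) :
    (digitMeasure b A).real Set.univ = b / (b - #A) := by
  have hb : (b : ℝ) ≠ 0 := by exact_mod_cast (Nat.zero_le _).trans_lt hAb |>.ne'
  have hbA : (b : ℝ) - #A ≠ 0 := sub_ne_zero.2 (by exact_mod_cast hAb.ne')
  rw [measureReal_def, digitMeasure_univ, ENNReal.tsum_geometric, ENNReal.toReal_inv,
    ENNReal.toReal_sub_of_le (card_div_lt_one hAb).le ENNReal.one_ne_top, ENNReal.toReal_div]
  simp only [ENNReal.toReal_one, ENNReal.toReal_natCast]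
  field_simp

lemma ae_digitMeasure_mem_Ico (hA : ∀ a ∈ A, a < b) :
    ∀ᵐ x ∂digitMeasure b A, x ∈ Set.Ico 0 1 := by
  rw [digitMeasure, Measure.ae_sum_iff]
  refine fun L =>
    Measure.ae_smul_measure ((ae_dirac_iff measurableSet_Ico).2 (radixValue_mem_Ico ?_)) _
  simp only [List.mem_map]
  rintro _ ⟨a, -, rfl⟩
  exact hA a a.2

lemma integrable_digitMeasure (hA : ∀ a ∈ A, a < b) (hAb : #A < b) {f : ℝ → ℝ}
    (hf : Continuous f) : Integrable f (digitMeasure b A) := by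
  have := isFiniteMeasure_digitMeasure hAb
  rw [← Measure.restrict_eq_self_of_ae_mem (ae_digitMeasure_mem_Ico hA)]
  exact hf.integrableOn_Icc.mono_set Set.Ico_subset_Icc_self

lemma integral_digitMeasure (hA : ∀ a ∈ A, a < b) (hAb : #A < b) {f : ℝ → ℝ}
    (hf : Continuous f) :
    ∫ x, f x ∂digitMeasure b A =
      f 0 + (b : ℝ)⁻¹ * ∑ a ∈ A, ∫ x, f ((a + x) / b) ∂digitMeasure b A := by
  have hg (a : ℕ) : Measurable fun x : ℝ => ((a : ℝ) + x) / b := by fun_prop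
  have hmap (a : ℕ) : Integrable f ((digitMeasure b A).map fun x : ℝ => ((a : ℝ) + x) / b) :=
    (integrable_map_measure hf.aestronglyMeasurable (hg a).aemeasurable).2
      (integrable_digitMeasure hA hAb (hf.comp (by fun_prop)))
  conv_lhs => rw [digitMeasure_eq_dirac_add_sum_map]
  rw [integral_add_measure (integrable_dirac ?_) ?_, integral_dirac, integral_smul_measure,
    integral_finsetSum_measure fun a _ => hmap a, ENNReal.toReal_inv, ENNReal.toReal_natCast,
    smul_eq_mul]
  · congr 2
    exact sum_congr rfl fun a _ => integral_map (hg a).aemeasurable hf.aestronglyMeasurable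
  · exact enorm_lt_top
  · exact (integrable_finsetSum_measure.2 fun a _ => hmap a).smul_measure (by simp; omega)

lemma integral_sub_shift_pow {μ : Measure ℝ} {d : ℝ}
    (hμ : ∀ k : ℕ, Integrable (fun x => (d - x) ^ k) μ) {c r : ℝ} (hr : r ≠ 0) (m : ℕ) :
    ∫ x, (d - (c + x) / r) ^ m ∂μ =
      (r ^ m)⁻¹ * ∑ j ∈ range (m + 1),
        (m.choose j : ℝ) * (r * d - c - d) ^ j * ∫ x, (d - x) ^ (m - j) ∂μ := by
  have hsplit (x : ℝ) : d - (c + x) / r = ((r * d - c - d) + (d - x)) / r := by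
    field_simp
    ring
  simp_rw [hsplit, div_pow, add_pow, sum_div]
  rw [integral_finsetSum _ fun j _ => (((hμ (m - j)).const_mul _).mul_const _).div_const _,
    mul_sum]
  refine sum_congr rfl fun j _ => ?_
  rw [integral_div, integral_mul_const, integral_const_mul]
  ring

variable (b A) in
lemma moment_recurrence (hA : ∀ a ∈ A, a < b) (hAb : #A < b) (d : ℝ) (m : ℕ) :
    ((b : ℝ) ^ (m + 1) - #A) * ∫ x, (d - x) ^ m ∂digitMeasure b A =
      (b : ℝ) ^ (m + 1) * d ^ m +
        ∑ j ∈ Icc 1 m, (m.choose j : ℝ) * (∑ a ∈ A, ((b : ℝ) * d - a - d) ^ j) *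
          ∫ x, (d - x) ^ (m - j) ∂digitMeasure b A := by
  have hb : (b : ℝ) ≠ 0 := by exact_mod_cast (Nat.zero_le _).trans_lt hAb |>.ne'
  have hint (k : ℕ) := integrable_digitMeasure hA hAb (f := fun x => (d - x) ^ k) (by fun_prop)
  have hself := integral_digitMeasure hA hAb (f := fun x => (d - x) ^ m) (by fun_prop)
  beta_reduce at hself
  rw [sum_congr rfl fun a _ => integral_sub_shift_pow hint hb m, ← mul_sum,
    sum_comm] at hself
  simp_rw [← sum_mul, ← mul_sum] at hself
  rw [range_eq_Ico, sum_eq_sum_Ico_succ_bot m.succ_pos] at hself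
  simp only [zero_add, Nat.succ_eq_add_one, Ico_add_one_right_eq_Icc, Nat.choose_zero_right,
    pow_zero, sum_const, nsmul_eq_mul, mul_one, Nat.cast_one, one_mul, Nat.sub_zero,
    sub_zero] at hself
  set S := ∑ j ∈ Icc 1 m, (m.choose j : ℝ) * (∑ a ∈ A, ((b : ℝ) * d - a - d) ^ j) *
    ∫ x, (d - x) ^ (m - j) ∂digitMeasure b A
  rw [pow_succ]
  field_simp at hself
  linear_combination hself

lemma vMoment_eq_integral {b : ℕ} (hb : b ≠ 0) (E : Finset ℕ) (m : ℕ) (d : ℝ) :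
    vMoment b E m d = ∫ x, (d - x) ^ m ∂digitMeasure b (range b \ E) := by
  rw [vMoment, kempnerMeasure_eq_digitMeasure hb, Measure.restrict_eq_self_of_ae_mem
    (ae_digitMeasure_mem_Ico fun a ha => mem_range.1 (mem_sdiff.1 ha).1)]

lemma cast_card_range_sdiff {b : ℕ} {E : Finset ℕ} (hEsub : ∀ d ∈ E, d < b) :
    (#(range b \ E) : ℝ) = b - #E := by
  have hsub : E ⊆ range b := fun d hd => mem_range.2 (hEsub d hd)
  rw [card_sdiff_of_subset hsub, card_range,
    Nat.cast_sub (card_range b ▸ card_le_card hsub)]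

end Kempner

open Kempner in
theorem vMoment_recurrence_one_general (b : ℕ) (E : Finset ℕ)
    (hE : E.Nonempty) (hEsub : ∀ d ∈ E, d < b) :
    (∀ d : ℝ, ∀ m : ℕ, 1 ≤ m →
      ((b : ℝ) ^ (m + 1) - ((Finset.range b \ E).card : ℝ)) * vMoment b E m d =
        (b : ℝ) ^ (m + 1) * d ^ m +
        ∑ j ∈ Finset.Icc 1 m, (m.choose j : ℝ) *
          (∑ a ∈ Finset.range b \ E, ((b : ℝ) * d - (a : ℝ) - d) ^ j) *
          vMoment b E (m - j) d) ∧
    (∀ d : ℝ, vMoment b E 0 d = (b : ℝ) / E.card) := by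
  have hb : b ≠ 0 := by
    obtain ⟨e, he⟩ := hE
    have := hEsub e he
    omega
  have hcard := cast_card_range_sdiff hEsub
  have hAb : #(range b \ E) < b := by
    have : (0 : ℝ) < #E := by exact_mod_cast card_pos.2 hE
    exact_mod_cast (by linarith : (#(range b \ E) : ℝ) < b)
  have hA : ∀ a ∈ range b \ E, a < b := fun a ha => mem_range.1 (mem_sdiff.1 ha).1
  simp only [vMoment_eq_integral hb]
  refine ⟨fun d m _ => moment_recurrence b _ hA hAb d m, fun d => ?_⟩
  simp only [pow_zero, integral_const, smul_eq_mul, mul_one]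
  rw [digitMeasure_real_univ hAb, hcard]
  ring

theorem vMoment_recurrence_one (b : ℕ) (hb : 2 ≤ b) (E : Finset ℕ)
    (hE : E.Nonempty) (hEsub : ∀ d ∈ E, d < b) :
    (∀ d : ℝ, ∀ m : ℕ, 1 ≤ m →
      ((b : ℝ) ^ (m + 1) - ((Finset.range b \ E).card : ℝ)) * vMoment b E m d =
        (b : ℝ) ^ (m + 1) * d ^ m +
        ∑ j ∈ Finset.Icc 1 m, (m.choose j : ℝ) *
          (∑ a ∈ Finset.range b \ E, ((b : ℝ) * d - (a : ℝ) - d) ^ j) *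
          vMoment b E (m - j) d) ∧
    (∀ d : ℝ, vMoment b E 0 d = (b : ℝ) / E.card) :=
  vMoment_recurrence_one_general b E hE hEsub
end

section
/- Let b ≥ 2 be an integer, E a nonempty set of base-b digits, A = {0,…,b−1} \ E, and N = #A. Then for every real number d and every integer m ≥ 1, (m+1)·(b^{m+1} − N)·v_m(d) = b·((db+1)^{m+1} − (db)^{m+1}) − Σ_{j=1}^{m} C(m+1, j+1)·( b^{m+1−j} − (bd+1−d)^{j+1} + (b−1)^{j+1}(d−1)^{j+1} + Σ_{a∈E} ((bd−a−d+1)^{j+1} − (bd−a−d)^{j+1}) )·v_{m−j}(d), where C(m+1,j+1) is the binomial coefficient. -/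
/-!
Write `W n c = ∫ (c - x) ^ n dμ` (a convergent series, since `μ` has total mass `b / (b - #A)`).
Splitting off the most significant digit shows that `μ` is self-similar under the contractions
`x ↦ (x + a) / b`, `a ∈ A`, which gives
`b ^ (n+1) W n c = b ^ (n+1) c ^ n + ∑_{a ∈ A} W n (b c - a)`.
Take `n = m + 1` and subtract the instances `c = d + 1/b` and `c = d`. Every difference
`W (m+1) (d + t) - W (m+1) d` expands binomially in `t` into `v_0(d), …, v_m(d)`; with `t = 1/b`
on the left and `t = b d - d - a + 1`, `b d - d - a` on the right this is the recurrence, once the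
sum over `a ∈ A` is written as the telescoping sum over all digits `a < b` minus the sum over `E`.
-/

open MeasureTheory Real ENNReal

def List.subtypeEquiv {α : Type*} (p : α → Prop) :
    List {x // p x} ≃ {l : List α // ∀ x ∈ l, p x} where
  toFun L := ⟨L.unattach, fun _ hx => (List.mem_unattach.mp hx).1⟩
  invFun X := X.1.attachWith p X.2
  left_inv L := by induction L <;> simp_all
  right_inv X := Subtype.ext List.unattach_attachWith

theorem List.summable_pow_length {α : Type*} [Fintype α] {r : ℝ} (hr : 0 ≤ r)
    (h : Fintype.card α * r < 1) : Summable fun L : List α => r ^ L.length := by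
  rw [← List.equivSigmaTuple.symm.summable_iff]
  refine (summable_sigma_of_nonneg fun _ => pow_nonneg hr _).mpr ⟨fun _ => .of_finite, ?_⟩
  simpa [Function.comp_def, mul_pow] using summable_geometric_of_lt_one (by positivity) h

theorem List.tsum_eq_add_tsum_tsum_concat {α G : Type*} [AddCommGroup G] [UniformSpace G]
    [IsUniformAddGroup G] [CompleteSpace G] [T0Space G] {f : List α → G} (hf : Summable f) :
    ∑' L, f L = f [] + ∑' a, ∑' L, f (L ++ [a]) := by
  classical
  have hinj : Function.Injective fun p : α × List α => p.2 ++ [p.1] := by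
    rintro ⟨a, L⟩ ⟨a', L'⟩ h
    obtain ⟨rfl, h⟩ := List.append_inj' h rfl
    simp_all
  have hprod := (hf.comp_injective hinj).tsum_prod
  simp only [Function.comp_apply] at hprod
  rw [← hprod, hf.tsum_eq_add_tsum_ite [], ← hinj.tsum_eq]
  · simp
  · intro L hL
    obtain rfl | ⟨L', a, rfl⟩ := L.eq_nil_or_concat'
    · simp at hL
    · exact ⟨(a, L'), rfl⟩

theorem Nat.ofDigits_div_pow_length_mem_Ico {b : ℕ} (hb : 1 < b) {l : List ℕ}
    (hl : ∀ x ∈ l, x < b) :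
    ((Nat.ofDigits b l : ℕ) : ℝ) / (b : ℝ) ^ l.length ∈ Set.Ico 0 1 := by
  have hpos : (0 : ℝ) < (b : ℝ) ^ l.length :=
    pow_pos (by exact_mod_cast (show 0 < b by omega)) _
  refine ⟨by positivity, (div_lt_one hpos).mpr ?_⟩
  exact_mod_cast Nat.ofDigits_lt_base_pow_length hb hl

theorem add_pow_succ_sub_pow {R : Type*} [CommRing R] (x y : R) (m : ℕ) :
    (x + y) ^ (m + 1) - y ^ (m + 1) =
      ∑ j ∈ Finset.range (m + 1), ((m + 1).choose (j + 1) : R) * x ^ (j + 1) * y ^ (m - j) := by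
  rw [add_pow, Finset.sum_range_succ', sub_eq_iff_eq_add]
  simp only [Nat.choose_zero_right, Nat.cast_one, pow_zero, one_mul, mul_one, Nat.sub_zero,
    Nat.add_sub_add_right]
  exact congrArg (· + _) (Finset.sum_congr rfl fun j _ => by ring)

theorem sum_range_pow_add_one_sub_pow {R : Type*} [CommRing R] (x : R) (n k : ℕ) :
    ∑ a ∈ Finset.range n, ((x - a + 1) ^ k - (x - a) ^ k) = (x + 1) ^ k - (x - n + 1) ^ k := by
  simpa only [Nat.cast_add, Nat.cast_one, Nat.cast_zero, sub_zero, sub_add_eq_sub_sub,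
    sub_add_cancel] using Finset.sum_range_sub' (fun a : ℕ => (x - a + 1) ^ k) n

namespace Kempner

noncomputable def digitWeight (b : ℕ) {A : Finset ℕ} (L : List A) : ℝ :=
  ((b : ℝ) ^ L.length)⁻¹

noncomputable def digitPoint (b : ℕ) {A : Finset ℕ} (L : List A) : ℝ :=
  ((Nat.ofDigits b L.unattach : ℕ) : ℝ) / (b : ℝ) ^ L.length

noncomputable def digitMoment (b : ℕ) (A : Finset ℕ) (n : ℕ) (c : ℝ) : ℝ :=
  ∑' L : List A, digitWeight b L * (c - digitPoint b L) ^ n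

variable {b : ℕ} {A : Finset ℕ}

theorem digitPoint_mem_Ico (hb : 1 < b) (hA : ∀ a ∈ A, a < b) (L : List A) :
    digitPoint b L ∈ Set.Ico 0 1 := by
  rw [digitPoint, ← List.length_unattach]
  exact Nat.ofDigits_div_pow_length_mem_Ico hb fun x hx => hA x (List.mem_unattach.mp hx).1

theorem summable_digitWeight_mul_pow (hb : 1 < b) (hA : ∀ a ∈ A, a < b) (hAb : A.card < b)
    (n : ℕ) (c : ℝ) :
    Summable fun L : List A => digitWeight b L * (c - digitPoint b L) ^ n := by
  have hb0 : (0 : ℝ) < b := by exact_mod_cast (show 0 < b by omega)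
  have hgeom : Summable fun L : List A => ((b : ℝ)⁻¹) ^ L.length := by
    refine List.summable_pow_length (by positivity) ?_
    rw [Fintype.card_coe, ← div_eq_mul_inv, div_lt_one hb0]
    exact_mod_cast hAb
  refine (hgeom.mul_left ((|c| + 1) ^ n)).of_norm_bounded fun L => ?_
  obtain ⟨h0, h1⟩ := digitPoint_mem_Ico hb hA L
  have hdist : |c - digitPoint b L| ≤ |c| + 1 := by
    calc |c - digitPoint b L| ≤ |c| + |digitPoint b L| := abs_sub c _
      _ ≤ |c| + 1 := by rw [abs_of_nonneg h0]; linarith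
  rw [norm_mul, norm_pow, Real.norm_eq_abs, Real.norm_eq_abs, digitWeight, ← inv_pow,
    abs_of_nonneg (by positivity), mul_comm]
  gcongr

theorem digitWeight_concat (L : List A) (a : A) :
    digitWeight b (L ++ [a]) = digitWeight b L / b := by
  rw [digitWeight, digitWeight, List.length_append, List.length_singleton, pow_succ, mul_inv,
    div_eq_mul_inv]

theorem digitPoint_concat (hb : b ≠ 0) (L : List A) (a : A) :
    digitPoint b (L ++ [a]) = (digitPoint b L + a) / b := by
  rw [digitPoint, digitPoint, List.unattach_append, Nat.ofDigits_append, List.length_append,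
    List.length_singleton, List.length_unattach]
  simp only [List.unattach_cons, List.unattach_nil, Nat.ofDigits_singleton]
  push_cast
  field_simp
  ring

theorem pow_mul_digitMoment_eq_add_sum (hb : 1 < b) (hA : ∀ a ∈ A, a < b) (hAb : A.card < b)
    (n : ℕ) (c : ℝ) :
    (b : ℝ) ^ (n + 1) * digitMoment b A n c =
      (b : ℝ) ^ (n + 1) * c ^ n + ∑ a ∈ A, digitMoment b A n (b * c - a) := by
  have hsum := summable_digitWeight_mul_pow hb hA hAb n c
  have hconcat : ∀ (a : A) (L : List A),
      digitWeight b (L ++ [a]) * (c - digitPoint b (L ++ [a])) ^ n =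
        ((b : ℝ) ^ (n + 1))⁻¹ * (digitWeight b L * (b * c - a - digitPoint b L) ^ n) := by
    intro a L
    have hshift : c - (digitPoint b L + a) / b = (b * c - a - digitPoint b L) / b := by
      field_simp
      ring
    rw [digitWeight_concat, digitPoint_concat (by omega), hshift, div_pow]
    field_simp
    ring
  rw [digitMoment, List.tsum_eq_add_tsum_tsum_concat hsum, tsum_fintype]
  simp only [hconcat, tsum_mul_left, ← Finset.mul_sum, ← Finset.sum_coe_sort A]
  rw [mul_add, mul_inv_cancel_left₀ (pow_ne_zero _ (by positivity))]
  simp [digitWeight, digitPoint, digitMoment]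

theorem digitMoment_succ_add_sub (hb : 1 < b) (hA : ∀ a ∈ A, a < b) (hAb : A.card < b)
    (m : ℕ) (c t : ℝ) :
    digitMoment b A (m + 1) (c + t) - digitMoment b A (m + 1) c =
      ∑ j ∈ Finset.range (m + 1),
        ((m + 1).choose (j + 1) : ℝ) * t ^ (j + 1) * digitMoment b A (m - j) c := by
  have hsum := summable_digitWeight_mul_pow hb hA hAb
  have hterm : ∀ L : List A,
      digitWeight b L * (c + t - digitPoint b L) ^ (m + 1) -
          digitWeight b L * (c - digitPoint b L) ^ (m + 1) =
        ∑ j ∈ Finset.range (m + 1), ((m + 1).choose (j + 1) : ℝ) * t ^ (j + 1) *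
          (digitWeight b L * (c - digitPoint b L) ^ (m - j)) := by
    intro L
    rw [← mul_sub, add_sub_right_comm, add_comm, add_pow_succ_sub_pow, Finset.mul_sum]
    exact Finset.sum_congr rfl fun j _ => by ring
  simp only [digitMoment, ← (hsum _ _).tsum_sub (hsum _ _), hterm, ← tsum_mul_left]
  exact (Summable.tsum_finsetSum fun j _ => (hsum _ _).mul_left _)

theorem sum_choose_mul_digitMoment (hb : 1 < b) (hA : ∀ a ∈ A, a < b) (hAb : A.card < b)
    (d : ℝ) (m : ℕ) :
    ∑ j ∈ Finset.range (m + 1), ((m + 1).choose (j + 1) : ℝ) *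
        ((b : ℝ) ^ (m + 1 - j) -
          ∑ a ∈ A, ((b * d - d - a + 1) ^ (j + 1) - (b * d - d - a) ^ (j + 1))) *
        digitMoment b A (m - j) d =
      b * ((d * b + 1) ^ (m + 1) - (d * b) ^ (m + 1)) := by
  have hscale : ∑ j ∈ Finset.range (m + 1),
      ((m + 1).choose (j + 1) : ℝ) * b ^ (m + 1 - j) * digitMoment b A (m - j) d =
        b ^ (m + 1 + 1) *
          (digitMoment b A (m + 1) (d + (b : ℝ)⁻¹) - digitMoment b A (m + 1) d) := by
    rw [digitMoment_succ_add_sub hb hA hAb, Finset.mul_sum]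
    refine Finset.sum_congr rfl fun j hj => ?_
    have hpow : (b : ℝ) ^ (m + 1 + 1) = b ^ (m + 1 - j) * b ^ (j + 1) := by
      rw [← pow_add]
      congr 1
      have := Finset.mem_range.mp hj
      omega
    rw [hpow, inv_pow]
    field_simp
  have hdigit : ∀ a : ℕ, ∑ j ∈ Finset.range (m + 1), ((m + 1).choose (j + 1) : ℝ) *
      ((b * d - d - a + 1) ^ (j + 1) - (b * d - d - a) ^ (j + 1)) * digitMoment b A (m - j) d =
        digitMoment b A (m + 1) (b * d - a + 1) - digitMoment b A (m + 1) (b * d - a) := by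
    intro a
    have h1 := digitMoment_succ_add_sub hb hA hAb m d (b * d - d - a + 1)
    have h2 := digitMoment_succ_add_sub hb hA hAb m d (b * d - d - a)
    rw [show d + (b * d - d - a + 1) = b * d - a + 1 by ring] at h1
    rw [show d + (b * d - d - a) = b * d - a by ring] at h2
    rw [← sub_sub_sub_cancel_right (digitMoment b A (m + 1) (b * d - a + 1)) _
      (digitMoment b A (m + 1) d), h1, h2, ← Finset.sum_sub_distrib]
    exact Finset.sum_congr rfl fun j _ => by ring
  have hshift : ∀ a : ℝ, b * (d + (b : ℝ)⁻¹) - a = b * d - a + 1 := fun a => by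
    field_simp
    ring
  have hself₁ := pow_mul_digitMoment_eq_add_sum hb hA hAb (m + 1) (d + (b : ℝ)⁻¹)
  have hself₀ := pow_mul_digitMoment_eq_add_sum hb hA hAb (m + 1) d
  simp only [hshift] at hself₁
  calc _ = ∑ j ∈ Finset.range (m + 1),
        ((m + 1).choose (j + 1) : ℝ) * b ^ (m + 1 - j) * digitMoment b A (m - j) d -
      ∑ a ∈ A, ∑ j ∈ Finset.range (m + 1), ((m + 1).choose (j + 1) : ℝ) *
        ((b * d - d - a + 1) ^ (j + 1) - (b * d - d - a) ^ (j + 1)) *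
          digitMoment b A (m - j) d := by
        rw [Finset.sum_comm, ← Finset.sum_sub_distrib]
        refine Finset.sum_congr rfl fun j _ => ?_
        simp only [Finset.mul_sum, Finset.sum_mul, mul_sub, sub_mul]
    _ = b ^ (m + 1 + 1) * ((d + (b : ℝ)⁻¹) ^ (m + 1) - d ^ (m + 1)) := by
        rw [hscale, Finset.sum_congr rfl fun a _ => hdigit a, Finset.sum_sub_distrib, mul_sub,
          hself₁, hself₀]
        ring
    _ = b * ((b * (d + (b : ℝ)⁻¹)) ^ (m + 1) - (d * b) ^ (m + 1)) := by rw [mul_pow]; ring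
    _ = _ := by rw [show (b : ℝ) * (d + (b : ℝ)⁻¹) = d * b + 1 by field_simp]

theorem vMoment_eq_digitMoment (hb : 1 < b) (E : Finset ℕ) (n : ℕ) (d : ℝ) :
    vMoment b E n d = digitMoment b (Finset.range b \ E) n d := by
  have hb0 : (b : ℝ≥0∞) ≠ 0 := by exact_mod_cast (show b ≠ 0 by omega)
  let e : List ↥(Finset.range b \ E) ≃ {l : List ℕ // ∀ d ∈ l, d < b ∧ d ∉ E} :=
    (List.subtypeEquiv _).trans (Equiv.subtypeEquivRight fun l => by simp)
  rw [vMoment, Measure.restrict_eq_self_of_ae_mem, kempnerMeasure,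
    integral_sum_dirac fun _ => ENNReal.inv_ne_top.mpr (pow_ne_zero _ hb0), ← e.tsum_eq]
  · simp [e, List.subtypeEquiv, digitMoment, digitWeight, digitPoint]
  · refine Measure.ae_sum_iff.mpr fun X => Measure.ae_smul_measure ?_ _
    exact (ae_dirac_iff measurableSet_Ico).mpr
      (Nat.ofDigits_div_pow_length_mem_Ico hb fun x hx => (X.2 x hx).1)

end Kempner

theorem vMoment_recurrence_two (b : ℕ) (hb : 2 ≤ b) (E : Finset ℕ)
    (hE : E.Nonempty) (hEsub : ∀ d ∈ E, d < b) :
    ∀ d : ℝ, ∀ m : ℕ, 1 ≤ m →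
      ((m : ℝ) + 1) * ((b : ℝ) ^ (m + 1) - ((Finset.range b \ E).card : ℝ)) *
          vMoment b E m d =
        (b : ℝ) * ((d * b + 1) ^ (m + 1) - (d * b) ^ (m + 1)) -
        ∑ j ∈ Finset.Icc 1 m, ((m + 1).choose (j + 1) : ℝ) *
          ((b : ℝ) ^ (m + 1 - j)
            - ((b : ℝ) * d + 1 - d) ^ (j + 1)
            + ((b : ℝ) - 1) ^ (j + 1) * (d - 1) ^ (j + 1)
            + ∑ a ∈ E, (((b : ℝ) * d - (a : ℝ) - d + 1) ^ (j + 1)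
                - ((b : ℝ) * d - (a : ℝ) - d) ^ (j + 1))) *
          vMoment b E (m - j) d := by
  intro d m _
  have hb1 : 1 < b := hb
  have hEA : E ⊆ Finset.range b := fun a ha => Finset.mem_range.mpr (hEsub a ha)
  have hA : ∀ a ∈ Finset.range b \ E, a < b := fun a ha =>
    Finset.mem_range.mp (Finset.mem_sdiff.mp ha).1
  have hAb : (Finset.range b \ E).card < b := by
    rw [Finset.card_sdiff_of_subset hEA, Finset.card_range]
    have := hE.card_pos
    omega
  have hinner : ∀ j : ℕ, (b : ℝ) ^ (m + 1 - j) - ((b : ℝ) * d + 1 - d) ^ (j + 1)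
      + ((b : ℝ) - 1) ^ (j + 1) * (d - 1) ^ (j + 1)
      + ∑ a ∈ E, (((b : ℝ) * d - a - d + 1) ^ (j + 1) - ((b : ℝ) * d - a - d) ^ (j + 1)) =
        (b : ℝ) ^ (m + 1 - j) - ∑ a ∈ Finset.range b \ E,
          (((b : ℝ) * d - d - a + 1) ^ (j + 1) - ((b : ℝ) * d - d - a) ^ (j + 1)) := by
    intro j
    have htel := sum_range_pow_add_one_sub_pow ((b : ℝ) * d - d) b (j + 1)
    rw [← Finset.sum_sdiff hEA] at htel
    simp only [sub_right_comm _ _ d]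
    rw [← mul_pow]
    linear_combination htel
  have hcore := Kempner.sum_choose_mul_digitMoment hb1 hA hAb d m
  rw [Finset.range_eq_Ico, Finset.sum_eq_sum_Ico_succ_bot (by omega : 0 < m + 1),
    Finset.Ico_add_one_right_eq_Icc] at hcore
  simp only [hinner, Kempner.vMoment_eq_digitMoment hb1]
  simp only [zero_add, pow_one, Nat.sub_zero, Nat.choose_one_right, add_sub_cancel_left,
    Finset.sum_const, nsmul_eq_mul, mul_one, Nat.cast_add, Nat.cast_one] at hcore
  linear_combination hcore
end
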